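/- arXiv:1011.5530 — 7 statements merged into one kernel-verified Lean document; each statement's English description precedes it below -/
import Mathlib

section
/- Let S ⊆ ℤ² be nonempty and such that the sum of S and T is direct and S ⊕ T is lattice-convex. If s, s' ∈ S satisfy s − s' = w₂ − w₁, then s' − w₁ ∈ S and s' + w₂ ∈ S. -/
open scoped Pointwise ENNReal

noncomputable section

abbrev Z2 : Type := ℤ × ℤ
abbrev R2 : Type := ℝ × ℝ

/-- The canonical embedding of `ℤ²` into `ℝ²`. -/
def toR (p : Z2) : R2 := ((p.1 : ℝ), (p.2 : ℝ))

/-- The standard scalar product on `ℝ²`. -/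
def dotR (x y : R2) : ℝ := x.1 * y.1 + x.2 * y.2

/-- The covariogram of a set `K ⊆ ℤ²`: `u ↦ |K ∩ (K + u)|`. -/
def cov (K : Set Z2) (u : Z2) : ℕ := (K ∩ ((fun x => x + u) '' K)).ncard

/-- `K ⊆ ℤ²` is lattice-convex if it is the intersection of `ℤ²` with a convex set. -/
def latticeConvex (K : Set Z2) : Prop := ∃ C : Set R2, Convex ℝ C ∧ K = toR ⁻¹' C

/-- The affine hull of `K` is all of `ℝ²`. -/
def spans (K : Set Z2) : Prop := affineSpan ℝ (toR '' K) = ⊤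

/-- `L ∈ [K]`: `L` is a translate of `K` or a translate of `−K`. -/
def sameClass (K L : Set Z2) : Prop :=
  ∃ t : Z2, L = (fun x => x + t) '' K ∨ L = (fun x => t - x) '' K

/-- The support set `F(K,u)` of `K` in direction `u ∈ ℝ²`. -/
def suppSet (K : Set Z2) (u : R2) : Set Z2 :=
  {x ∈ K | ∀ y ∈ K, dotR (toR y) u ≤ dotR (toR x) u}

/-- A vector of `ℤ²` is primitive if the gcd of its coordinates is `1`. -/
def primitive (u : Z2) : Prop := Int.gcd u.1 u.2 = 1

/-- `u ≠ 0` is an outer normal of an edge of `K` if `F(K,u)` has more than one point. -/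
def isEdge (K : Set Z2) (u : Z2) : Prop := u ≠ 0 ∧ 1 < (suppSet K (toR u)).ncard

/-- `U(K)`: primitive outer normals of edges of `K`. -/
def normals (K : Set Z2) : Set Z2 := {u | primitive u ∧ isEdge K u}

/-- `−K`. -/
def negSet (K : Set Z2) : Set Z2 := (fun x => -x) '' K

/-- `m'(K) = min {|F(K,u)| : u ∈ U(K)}` (with `min ∅ = ∞`). -/
def mOne (K : Set Z2) : ℝ≥0∞ := ⨅ u ∈ normals K, ((suppSet K (toR u)).ncard : ℝ≥0∞)

/-- `m''(K) = min {|F(K,u)| − |F(K,−u)| + 1 : u ≠ 0, |F(K,u)| > |F(K,−u)| > 1}`. -/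
def mTwo (K : Set Z2) : ℝ≥0∞ :=
  ⨅ u ∈ {u : Z2 | u ≠ 0 ∧ 1 < (suppSet K (toR (-u))).ncard ∧
      (suppSet K (toR (-u))).ncard < (suppSet K (toR u)).ncard},
    (((suppSet K (toR u)).ncard - (suppSet K (toR (-u))).ncard + 1 : ℕ) : ℝ≥0∞)

/-- `m(K) = min {m'(K), m''(K)}`. -/
def mm (K : Set Z2) : ℝ≥0∞ := min (mOne K) (mTwo K)

/-- Determinant of the 2×2 matrix with columns `u`, `v`. -/
def detZ (u v : Z2) : ℤ := u.1 * v.2 - u.2 * v.1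

/-- `D(U) = {|det(u₁,u₂)| : u₁, u₂ ∈ U} \ {0}`. -/
def Dset (U : Set Z2) : Set ℝ≥0∞ :=
  {d | d ≠ 0 ∧ ∃ u ∈ U, ∃ v ∈ U, d = ((detZ u v).natAbs : ℝ≥0∞)}

/-- The discrepancy `δ(U) = max D(U) / min D(U)`. -/
def disc (U : Set Z2) : ℝ≥0∞ := sSup (Dset U) / sInf (Dset U)

/-- `δ(K) = δ(U(K))`. -/
def discK (K : Set Z2) : ℝ≥0∞ := disc (normals K)

/-- Two vectors of `ℝ²` are parallel (linearly dependent). -/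
def Parallel2 (x w : R2) : Prop := x.1 * w.2 = x.2 * w.1

/-- Two vectors of `ℤ²` are parallel (linearly dependent). -/
def ParallelZ (u v : Z2) : Prop := u.1 * v.2 = u.2 * v.1

/-- A polyhedron in `ℝ²`: an intersection of finitely many closed halfplanes. -/
def IsPolyhedron (P : Set R2) : Prop :=
  ∃ H : Finset (R2 × ℝ), P = ⋂ h ∈ H, {x : R2 | dotR x h.1 ≤ h.2}

/-- `E` is an edge (one-dimensional face) of the polyhedron `P`:
a convex extreme subset of `P` with at least two points that is contained in a line. -/
def IsPolyEdge (P E : Set R2) : Prop :=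
  IsExtreme ℝ P E ∧ Convex ℝ E ∧ (∃ p ∈ E, ∃ q ∈ E, p ≠ q) ∧
    ∃ a d : R2, ∀ x ∈ E, ∃ t : ℝ, x = a + t • d

/-- Every edge of `P` is parallel to some vector of `W`. -/
def edgesParallelTo (P : Set R2) (W : Set Z2) : Prop :=
  ∀ E : Set R2, IsPolyEdge P E → ∃ w ∈ W, ∀ p ∈ E, ∀ q ∈ E, Parallel2 (p - q) (toR w)

/-- `u` is parallel to an edge of the convex hull of `K`. -/
def parEdgeHull (K : Set Z2) (u : Z2) : Prop :=
  ∃ E : Set R2, IsPolyEdge (convexHull ℝ (toR '' K)) E ∧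
    ∀ p ∈ E, ∀ q ∈ E, Parallel2 (p - q) (toR u)

/-- The conical hull of a set in `ℝ²`. -/
def coneHull (s : Set R2) : Set R2 :=
  {x | ∃ c : ℝ, 0 ≤ c ∧ ∃ y ∈ convexHull ℝ s, x = c • y}

/-- The supporting cone `S(K,v) = cone (K − v)`. -/
def suppCone (K : Set Z2) (v : Z2) : Set R2 :=
  coneHull ((fun x => toR x - toR v) '' K)

/-- `v` is a vertex of `K`: a support set of `K` consisting of exactly one point. -/
def isVertex (K : Set Z2) (v : Z2) : Prop := ∃ u : R2, u ≠ 0 ∧ suppSet K u = {v}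

/-- A set is centrally symmetric if it is a translate of its reflection. -/
def centSym (A : Set Z2) : Prop := ∃ t : Z2, A = (fun x => t - x) '' A

/-- The Minkowski sum of `S` and `T` is direct. -/
def directSum (S T : Set Z2) : Prop :=
  ∀ s ∈ S, ∀ s' ∈ S, ∀ t ∈ T, ∀ t' ∈ T, s + t = s' + t' → s = s' ∧ t = t'

/-- `T₁ = {0,…,k} × {0}`. -/
def T1set (k : ℤ) : Set Z2 := {p | 0 ≤ p.1 ∧ p.1 ≤ k ∧ p.2 = 0}

/-- `T₂ = {0,…,ℓ} × {1}`. -/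
def T2set (l : ℤ) : Set Z2 := {p | 0 ≤ p.1 ∧ p.1 ≤ l ∧ p.2 = 1}

/-- `T = ({0,…,k} × {0}) ∪ ({0,…,ℓ} × {1})`. -/
def Tset (k l : ℤ) : Set Z2 := T1set k ∪ T2set l

def wOne (k : ℤ) : Z2 := (-k - 1, 1)
def wTwo (l : ℤ) : Z2 := (l + 1, 1)

/-- The lattice `𝕃 = ℤw₁ + ℤw₂`. -/
def ZLat (k l : ℤ) : Set Z2 := {p | ∃ a b : ℤ, p = a • wOne k + b • wTwo l}

/-- `S` is lattice-convex with respect to the lattice `Λ`. -/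
def latticeConvexIn (Λ S : Set Z2) : Prop := ∃ C : Set R2, Convex ℝ C ∧ S = Λ ∩ toR ⁻¹' C

/-- The translate `s + A`. -/
def transl (s : Z2) (A : Set Z2) : Set Z2 := (fun x => s + x) '' A

/-- The horizontal section `I_h` of `K` at height `h`. -/
def sect (K : Set Z2) (h : ℤ) : Set Z2 := {p ∈ K | p.2 = h}

/-- `𝒯(h)`: the members of `𝒯₁ ∪ 𝒯₂` contained in `I_h`. -/
def TcalSet (k l : ℤ) (S : Set Z2) (h : ℤ) : Set (Set Z2) :=
  {J | (∃ s ∈ S, J = transl s (T1set k) ∨ J = transl s (T2set l)) ∧ J ⊆ sect (S + Tset k l) h}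

/-- `J` strictly precedes `J'` in the left-to-right order. -/
def precedes (J J' : Set Z2) : Prop := ∀ p ∈ J, ∀ q ∈ J', p.1 < q.1

/-- Adjacency in the graph `G_S`. -/
def adjStep (k l : ℤ) (S : Set Z2) (a b : Z2) : Prop :=
  a ∈ S ∧ b ∈ S ∧
    (b - a = wOne k ∨ b - a = -(wOne k) ∨ b - a = wTwo l ∨ b - a = -(wTwo l) ∨
      (k = l + 1 ∧ (b - a = wOne k + wTwo l ∨ b - a = -(wOne k + wTwo l))))

/-- The graph `G_S` is connected. -/
def GConnected (k l : ℤ) (S : Set Z2) : Prop :=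
  ∀ s ∈ S, ∀ s' ∈ S, Relation.ReflTransGen (adjStep k l S) s s'

end

/-
Write `s = s' + (k + ℓ + 2, 0)`. In the row of `K = S ⊕ T` through `s'`, the translates
`s' + T₁` and `s + T₁` leave the gap point `s' + (k + 1, 0)`; in the row above, `s' + T₂` and
`s + T₂` leave the gap point `s' + (ℓ + 1, 1)`. Lattice-convexity puts both gap points in `K`.
Writing such a point as `σ + t` with `σ ∈ S`, `t ∈ T`, every choice of `t` but one makes
`σ - s'` or `σ - s` a nonzero element of `T - T`, which directness forbids; the remaining choices
are `σ = s' - w₁, t = (0, 1)` and `σ = s' + w₂, t = (0, 0)`.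
-/

theorem latticeConvex.mem_of_le_of_le {K : Set Z2} (hK : latticeConvex K) {a b x h : ℤ}
    (ha : (a, h) ∈ K) (hb : (b, h) ∈ K) (hax : a ≤ x) (hxb : x ≤ b) : (x, h) ∈ K := by
  obtain ⟨C, hC, rfl⟩ := hK
  have hxab : toR (x, h) ∈ segment ℝ (toR (a, h)) (toR (b, h)) := by
    rw [toR, toR, toR, ← Prod.image_mk_segment_left,
      segment_eq_Icc (Int.cast_le.mpr (hax.trans hxb))]
    exact ⟨x, ⟨Int.cast_le.mpr hax, Int.cast_le.mpr hxb⟩, rfl⟩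
  exact hC.segment_subset ha hb hxab

theorem directSum.eq_of_sub_mem_sub {S T : Set Z2} (hdir : directSum S T) {p q : Z2}
    (hp : p ∈ S) (hq : q ∈ S) (hpq : p - q ∈ T - T) : p = q := by
  obtain ⟨t, ht, t', ht', htt'⟩ := Set.mem_sub.mp hpq
  refine (hdir p hp q hq t' ht' t ht ?_).1
  rw [add_comm q]
  exact (sub_eq_sub_iff_add_eq_add.mp htt').symm

section Tset

variable {k l : ℤ}

theorem mem_Tset_sub_Tset (hk : 0 ≤ k) (hl : 0 ≤ l) {a b : ℤ}
    (hab : (b = 0 ∧ -k ≤ a ∧ a ≤ k) ∨ (b = 1 ∧ -k ≤ a ∧ a ≤ l) ∨ (b = -1 ∧ -l ≤ a ∧ a ≤ k)) :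
    (a, b) ∈ Tset k l - Tset k l := by
  have h1 {j : ℤ} (hj : 0 ≤ j) (hjk : j ≤ k) : ((j, 0) : Z2) ∈ Tset k l :=
    Or.inl ⟨hj, hjk, rfl⟩
  have h2 {j : ℤ} (hj : 0 ≤ j) (hjl : j ≤ l) : ((j, 1) : Z2) ∈ Tset k l :=
    Or.inr ⟨hj, hjl, rfl⟩
  rcases hab with ⟨rfl, ha⟩ | ⟨rfl, ha⟩ | ⟨rfl, ha⟩ <;>
    rcases le_or_gt 0 a with ha0 | ha0
  · exact ⟨_, h1 ha0 ha.2, _, h1 le_rfl hk, by simp⟩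
  · exact ⟨_, h1 le_rfl hk, _, h1 (j := -a) (by omega) (by omega), by simp⟩
  · exact ⟨_, h2 ha0 ha.2, _, h1 le_rfl hk, by simp⟩
  · exact ⟨_, h2 le_rfl hl, _, h1 (j := -a) (by omega) (by omega), by simp⟩
  · exact ⟨_, h1 ha0 ha.2, _, h2 le_rfl hl, by simp⟩
  · exact ⟨_, h1 le_rfl hk, _, h2 (j := -a) (by omega) (by omega), by simp⟩

theorem add_mem_add_Tset₁ {S : Set Z2} {x y j : ℤ} (hxy : (x, y) ∈ S) (hj : 0 ≤ j)
    (hjk : j ≤ k) : (x + j, y) ∈ S + Tset k l := by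
  simpa using Set.add_mem_add hxy (show ((j, 0) : Z2) ∈ Tset k l from Or.inl ⟨hj, hjk, rfl⟩)

theorem add_mem_add_Tset₂ {S : Set Z2} {x y j : ℤ} (hxy : (x, y) ∈ S) (hj : 0 ≤ j)
    (hjl : j ≤ l) : (x + j, y + 1) ∈ S + Tset k l := by
  simpa using Set.add_mem_add hxy (show ((j, 1) : Z2) ∈ Tset k l from Or.inr ⟨hj, hjl, rfl⟩)

end Tset

section Gap

variable {k l : ℤ} {S : Set Z2}

theorem sub_wOne_mem_of_gap (hl : 0 ≤ l) (hkl : l < k) (hdir : directSum S (Tset k l))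
    (hconv : latticeConvex (S + Tset k l)) {x y : ℤ} (hs' : (x, y) ∈ S)
    (hs : (x + (k + l + 2), y) ∈ S) : (x + (k + 1), y - 1) ∈ S := by
  have hk : 0 ≤ k := hl.trans hkl.le
  have hp : (x + (k + 1), y) ∈ S + Tset k l :=
    hconv.mem_of_le_of_le (add_mem_add_Tset₁ hs' hk le_rfl) (add_mem_add_Tset₁ hs le_rfl hk)
      (by omega) (by omega)
  obtain ⟨⟨a, b⟩, hσ, ⟨j, c⟩, ht, hsum⟩ := hp
  simp only [Prod.mk_add_mk, Prod.mk.injEq] at hsum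
  rcases ht with ⟨hj0, hjk, rfl⟩ | ⟨hj0, hjl, rfl⟩ <;> rcases hj0.eq_or_lt with rfl | hj
  · have := Prod.mk.inj <| hdir.eq_of_sub_mem_sub hσ hs (mem_Tset_sub_Tset hk hl (by omega))
    omega
  · have := Prod.mk.inj <| hdir.eq_of_sub_mem_sub hσ hs' (mem_Tset_sub_Tset hk hl (by omega))
    omega
  · convert hσ using 2 <;> omega
  · have := Prod.mk.inj <| hdir.eq_of_sub_mem_sub hσ hs' (mem_Tset_sub_Tset hk hl (by omega))
    omega

theorem add_wTwo_mem_of_gap (hl : 0 ≤ l) (hkl : l < k) (hdir : directSum S (Tset k l))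
    (hconv : latticeConvex (S + Tset k l)) {x y : ℤ} (hs' : (x, y) ∈ S)
    (hs : (x + (k + l + 2), y) ∈ S) : (x + (l + 1), y + 1) ∈ S := by
  have hk : 0 ≤ k := hl.trans hkl.le
  have hq : (x + (l + 1), y + 1) ∈ S + Tset k l :=
    hconv.mem_of_le_of_le (add_mem_add_Tset₂ hs' hl le_rfl) (add_mem_add_Tset₂ hs le_rfl hl)
      (by omega) (by omega)
  obtain ⟨⟨a, b⟩, hσ, ⟨j, c⟩, ht, hsum⟩ := hq
  simp only [Prod.mk_add_mk, Prod.mk.injEq] at hsum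
  rcases ht with ⟨hj0, hjk, rfl⟩ | ⟨hj0, hjl, rfl⟩
  · rcases hj0.eq_or_lt with rfl | hj
    · convert hσ using 2 <;> omega
    · have := Prod.mk.inj <| hdir.eq_of_sub_mem_sub hσ hs' (mem_Tset_sub_Tset hk hl (by omega))
      omega
  · have := Prod.mk.inj <| hdir.eq_of_sub_mem_sub hσ hs' (mem_Tset_sub_Tset hk hl (by omega))
    omega

end Gap

theorem neighbor_forced_I_general
    (k l : ℤ) (hl : 0 ≤ l) (hkl : l < k)
    (S : Set Z2) (hdir : directSum S (Tset k l))
    (hconv : latticeConvex (S + Tset k l))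
    (s s' : Z2) (hs : s ∈ S) (hs' : s' ∈ S)
    (hd : s - s' = wTwo l - wOne k) :
    s' - wOne k ∈ S ∧ s' + wTwo l ∈ S := by
  obtain ⟨x, y⟩ := s'
  obtain rfl : s = (x + (k + l + 2), y) := by
    rw [← sub_add_cancel s (x, y), hd]
    simp only [wOne, wTwo, Prod.mk_sub_mk, Prod.mk_add_mk, Prod.mk.injEq]
    constructor <;> ring
  have hw₁ : (x, y) - wOne k = (x + (k + 1), y - 1) := by
    simp only [wOne, Prod.mk_sub_mk, Prod.mk.injEq, and_true]
    ring
  rw [hw₁]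
  exact ⟨sub_wOne_mem_of_gap hl hkl hdir hconv hs' hs,
    add_wTwo_mem_of_gap hl hkl hdir hconv hs' hs⟩

/-- if `s − s' = w₂ − w₁` for `s, s' ∈ S`, then `s' − w₁ ∈ S` and
`s' + w₂ ∈ S`. -/
theorem neighbor_forced_I
    (k l : ℤ) (hl : 0 ≤ l) (hkl : l < k)
    (S : Set Z2) (hSne : S.Nonempty) (hdir : directSum S (Tset k l))
    (hconv : latticeConvex (S + Tset k l))
    (s s' : Z2) (hs : s ∈ S) (hs' : s' ∈ S)
    (hd : s - s' = wTwo l - wOne k) :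
    s' - wOne k ∈ S ∧ s' + wTwo l ∈ S :=
  neighbor_forced_I_general k l hl hkl S hdir hconv s s' hs hs' hd
end

section
/- Let k − ℓ > 1 and let S ⊆ ℤ² be nonempty and such that the sum of S and T is direct and S ⊕ T is lattice-convex. If s, s' ∈ S satisfy s − s' = w₁ + w₂, then s' + w₁ ∈ S and s' + w₂ ∈ S. -/
open scoped Pointwise ENNReal

/- `s' + w₂` is the midpoint of `s' + (ℓ + 2, 0)` and `s + (k, 0)`, and `s' + w₁ + (k, 0)` that
of `s'` and `s + (k - ℓ - 2, 0)`; all four points lie in `S ⊕ T`, hence so do the midpoints.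
Write such a midpoint as `a + t` with `a ∈ S`, `t ∈ T`. Unless `a = s' + w₂`, resp. `a = s' + w₁`,
either `a` lies in the row of `s'` at horizontal distance `1, …, k`, or `a` and `s` (resp. `s'`)
lie in adjacent rows with the lower one shifted right by `0, …, k`; each case gives a point of
`S + T` with two representations. -/

theorem latticeConvex.mem_of_add_eq_two_smul {K : Set Z2} (hK : latticeConvex K) {x y z : Z2}
    (hx : x ∈ K) (hy : y ∈ K) (hz : x + y = 2 • z) : z ∈ K := by
  obtain ⟨C, hC, rfl⟩ := hK
  have h1 : (x.1 : ℝ) + y.1 = 2 * z.1 := by exact_mod_cast congrArg Prod.fst hz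
  have h2 : (x.2 : ℝ) + y.2 = 2 * z.2 := by exact_mod_cast congrArg Prod.snd hz
  have hmid : toR z = (1 / 2 : ℝ) • toR x + (1 / 2 : ℝ) • toR y := by
    ext <;> simp only [toR, Prod.smul_fst, Prod.smul_snd, Prod.fst_add, Prod.snd_add,
      smul_eq_mul] <;> linarith
  show toR z ∈ C
  rw [hmid]
  exact hC hx hy (by norm_num) (by norm_num) (by norm_num)

theorem directSum.add_sub_notMem {S T : Set Z2} (h : directSum S T) {a t t' : Z2} (ha : a ∈ S)
    (ht : t ∈ T) (ht' : t' ∈ T) (hne : t ≠ t') : a + t - t' ∉ S := fun hb =>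
  hne (h a ha _ hb t ht t' ht' (sub_add_cancel _ _).symm).2

theorem mem_add_Tset_iff {S : Set Z2} {k l : ℤ} {z : Z2} :
    z ∈ S + Tset k l ↔ ∃ j : ℤ, (0 ≤ j ∧ j ≤ k ∧ z - (j, 0) ∈ S) ∨
      (0 ≤ j ∧ j ≤ l ∧ z - (j, 1) ∈ S) := by
  constructor
  · rintro ⟨a, ha, t, ht, rfl⟩
    rcases ht with ⟨h0, hk, h2⟩ | ⟨h0, hl, h2⟩
    · exact ⟨t.1, Or.inl ⟨h0, hk, by rwa [← h2, add_sub_cancel_right]⟩⟩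
    · exact ⟨t.1, Or.inr ⟨h0, hl, by rwa [← h2, add_sub_cancel_right]⟩⟩
  · rintro ⟨j, ⟨h0, hk, hS⟩ | ⟨h0, hl, hS⟩⟩
    · exact ⟨_, hS, (j, 0), Or.inl ⟨h0, hk, rfl⟩, sub_add_cancel _ _⟩
    · exact ⟨_, hS, (j, 1), Or.inr ⟨h0, hl, rfl⟩, sub_add_cancel _ _⟩

section

variable {k l : ℤ} {S : Set Z2}

theorem directSum.add_horizontal_notMem (h : directSum S (Tset k l)) {a : Z2} (ha : a ∈ S)
    {m : ℤ} (hm0 : 0 < m) (hmk : m ≤ k) : a + (m, 0) ∉ S := by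
  simpa using h.add_sub_notMem ha (t := (m, 0)) (t' := 0) (Or.inl ⟨hm0.le, hmk, rfl⟩)
    (Or.inl ⟨le_rfl, hm0.le.trans hmk, rfl⟩) (by simp [hm0.ne'])

theorem directSum.add_lowerRow_notMem (h : directSum S (Tset k l)) (hl : 0 ≤ l) {a : Z2}
    (ha : a ∈ S) {m : ℤ} (hm0 : 0 ≤ m) (hmk : m ≤ k) : a + (m, -1) ∉ S := by
  have hsub : a + (m, 0) - (0, 1) = a + (m, -1) := by
    ext <;> simp [sub_eq_add_neg]
  simpa [hsub] using h.add_sub_notMem ha (t := (m, 0)) (t' := (0, 1)) (Or.inl ⟨hm0, hmk, rfl⟩)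
    (Or.inr ⟨le_rfl, hl, rfl⟩) (by simp)

theorem directSum.add_wOne_mem (h : directSum S (Tset k l)) (hl : 0 ≤ l) (hlk : l < k)
    {s' : Z2} (hs' : s' ∈ S) (hp : s' + wOne k + (k, 0) ∈ S + Tset k l) : s' + wOne k ∈ S := by
  obtain ⟨j, ⟨hj0, hjk, ha⟩ | ⟨hj0, hjl, ha⟩⟩ := mem_add_Tset_iff.mp hp
  · rcases hjk.eq_or_lt with rfl | hjk
    · simpa using ha
    · have hback : s' + wOne k + (k, 0) - (j, 0) + (j + 1, -1) = s' := by
        ext <;> simp [wOne]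
        ring
      exact absurd (hback ▸ hs') (h.add_lowerRow_notMem hl ha (by omega) (by omega))
  · have hback : s' + wOne k + (k, 0) - (j, 1) + (j + 1, 0) = s' := by
      ext <;> simp [wOne]
      ring
    exact absurd (hback ▸ hs') (h.add_horizontal_notMem ha (by omega) (by omega))

theorem directSum.add_wTwo_mem (h : directSum S (Tset k l)) (hl : 0 ≤ l) (hlk : l < k)
    {s' : Z2} (hs' : s' ∈ S) (hs : s' + wOne k + wTwo l ∈ S)
    (hq : s' + wTwo l ∈ S + Tset k l) : s' + wTwo l ∈ S := by
  obtain ⟨j, ⟨hj0, hjk, ha⟩ | ⟨hj0, hjl, ha⟩⟩ := mem_add_Tset_iff.mp hq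
  · rcases hj0.eq_or_lt with rfl | hj0
    · simpa [Prod.mk_zero_zero] using ha
    · have hfwd : s' + wTwo l - (j, 0) = s' + wOne k + wTwo l + (k + 1 - j, -1) := by
        ext <;> simp [wOne, wTwo]
        ring
      exact absurd (hfwd ▸ ha) (h.add_lowerRow_notMem hl hs (by omega) (by omega))
  · have hfwd : s' + wTwo l - (j, 1) = s' + (l + 1 - j, 0) := by
      ext <;> simp [wTwo]
      ring
    exact absurd (hfwd ▸ ha) (h.add_horizontal_notMem hs' (by omega) (by omega))

end

theorem neighbor_forced_II_general
    (k l : ℤ) (hl : 0 ≤ l) (hkl : l + 1 < k)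
    (S : Set Z2) (hdir : directSum S (Tset k l))
    (hconv : latticeConvex (S + Tset k l))
    (s s' : Z2) (hs : s ∈ S) (hs' : s' ∈ S)
    (hd : s - s' = wOne k + wTwo l) :
    s' + wOne k ∈ S ∧ s' + wTwo l ∈ S := by
  obtain rfl : s = s' + wOne k + wTwo l := by rw [add_assoc, ← hd, add_sub_cancel]
  have row_mem : ∀ a ∈ S, ∀ j : ℤ, 0 ≤ j → j ≤ k → a + (j, 0) ∈ S + Tset k l :=
    fun a ha j hj0 hjk => Set.add_mem_add ha (Or.inl ⟨hj0, hjk, rfl⟩)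
  constructor
  · refine hdir.add_wOne_mem hl (by omega) hs' (hconv.mem_of_add_eq_two_smul
      (row_mem _ hs' 0 le_rfl (by omega)) (row_mem _ hs (k - l - 2) (by omega) (by omega)) ?_)
    ext <;> simp [wOne, wTwo] <;> ring
  · refine hdir.add_wTwo_mem hl (by omega) hs' hs (hconv.mem_of_add_eq_two_smul
      (row_mem _ hs' (l + 2) (by omega) (by omega)) (row_mem _ hs k (by omega) le_rfl) ?_)
    ext <;> simp [wOne, wTwo] <;> ring

/-- for `k − ℓ > 1`, if `s − s' = w₁ + w₂` for `s, s' ∈ S`, then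
`s' + w₁ ∈ S` and `s' + w₂ ∈ S`. -/
theorem neighbor_forced_II
    (k l : ℤ) (hl : 0 ≤ l) (hkl : l + 1 < k)
    (S : Set Z2) (hSne : S.Nonempty) (hdir : directSum S (Tset k l))
    (hconv : latticeConvex (S + Tset k l))
    (s s' : Z2) (hs : s ∈ S) (hs' : s' ∈ S)
    (hd : s - s' = wOne k + wTwo l) :
    s' + wOne k ∈ S ∧ s' + wTwo l ∈ S :=
  neighbor_forced_II_general k l hl hkl S hdir hconv s s' hs hs' hd
end

section
/- Let k − ℓ = 1 and let S ⊆ ℤ² be nonempty and such that the sum of S and T is direct and S ⊕ T is lattice-convex. Then for all s, s' ∈ S: if s − s' = w₁ + 2w₂, then s' + w₂ ∈ S and s' + w₁ + w₂ ∈ S; and if s − s' = 2w₁ + w₂, then s' + w₁ ∈ S and s' + w₁ + w₂ ∈ S. -/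
open scoped Pointwise ENNReal

/-!
Each membership is forced by lattice convexity together with directness. Two points of `S ⊕ T`
built from `s` and `s'` have a lattice point `p` of the form `q + t₀` (with `t₀ ∈ T` and `q` the
point to be found in `S`) as a convex combination, so `p = s₀ + t` for some `s₀ ∈ S`, `t ∈ T`.
For every `t ≠ t₀` the point `s₀ = p - t` differs from `s` or from `s'` by a nonzero element of
`T - T`, which directness forbids; hence `t = t₀` and `q = s₀ ∈ S`.
-/

section

variable {k l : ℤ} {S : Set Z2}

theorem directSum.eq_of_sub_mem_sub_s15 {T : Set Z2} (hdir : directSum S T) {s s' : Z2}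
    (hs : s ∈ S) (hs' : s' ∈ S) (h : s - s' ∈ T - T) : s = s' := by
  obtain ⟨a, ha, b, hb, hab⟩ := h
  refine (hdir s hs s' hs' b hb a ha ?_).1
  rw [add_comm s' a]
  exact sub_eq_sub_iff_add_eq_add.mp hab.symm

theorem directSum.mem_of_add_mem {T : Set Z2} (hdir : directSum S T) {q t₀ : Z2}
    (hq : q + t₀ ∈ S + T)
    (hforce : ∀ t ∈ T, t ≠ t₀ → ∃ s ∈ S, q + t₀ - t - s ∈ (T - T) \ {0}) : q ∈ S := by
  obtain ⟨s₀, hs₀, t, ht, hst⟩ := hq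
  by_cases htt : t = t₀
  · rw [htt] at hst
    rwa [← add_right_cancel hst]
  obtain ⟨s, hs, hsub, hne⟩ := hforce t ht htt
  rw [← hst, add_sub_cancel_right] at hsub hne
  exact absurd (sub_eq_zero.mpr (hdir.eq_of_sub_mem_sub_s15 hs₀ hs hsub)) hne

theorem latticeConvex.mem_of_smul_eq {K : Set Z2} (hK : latticeConvex K) {a b p : Z2}
    (ha : a ∈ K) (hb : b ∈ K) {m n : ℤ} (hm : 0 ≤ m) (hn : 0 ≤ n) (hmn : 0 < m + n)
    (h : (m + n) • p = m • a + n • b) : p ∈ K := by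
  obtain ⟨C, hC, rfl⟩ := hK
  have hmn' : (0 : ℝ) < m + n := by exact_mod_cast hmn
  have hcoord : ∀ (pi ai bi : ℤ), (m + n) * pi = m * ai + n * bi →
      (pi : ℝ) = (m / (m + n) : ℝ) * ai + (n / (m + n) : ℝ) * bi := by
    intro pi ai bi hi
    have : ((m + n) * pi : ℝ) = m * ai + n * bi := by exact_mod_cast hi
    field_simp
    linarith
  have key : toR p = (m / (m + n) : ℝ) • toR a + (n / (m + n) : ℝ) • toR b := by
    ext
    · exact hcoord _ _ _ (congrArg Prod.fst h)
    · exact hcoord _ _ _ (congrArg Prod.snd h)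
  rw [Set.mem_preimage, key]
  exact hC ha hb (by positivity) (by positivity) (by field_simp)

theorem mem_Tset_sub_Tset_sdiff_zero (hl : 0 ≤ l) (hlk : l ≤ k) {x : Z2}
    (h : x.2 = 0 ∧ x.1 ≠ 0 ∧ -k ≤ x.1 ∧ x.1 ≤ k ∨ x.2 = 1 ∧ -k ≤ x.1 ∧ x.1 ≤ l ∨
      x.2 = -1 ∧ -l ≤ x.1 ∧ x.1 ≤ k) :
    x ∈ (Tset k l - Tset k l) \ {0} := by
  refine ⟨⟨x⁺, ?_, x⁻, ?_, posPart_sub_negPart x⟩, fun hx => ?_⟩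
  · simp only [Tset, T1set, T2set, Set.mem_union, Set.mem_ofPred_eq, posPart_def,
      Prod.fst_sup, Prod.snd_sup, Prod.fst_zero, Prod.snd_zero]
    omega
  · simp only [Tset, T1set, T2set, Set.mem_union, Set.mem_ofPred_eq, negPart_def,
      Prod.fst_sup, Prod.snd_sup, Prod.fst_neg, Prod.snd_neg, Prod.fst_zero, Prod.snd_zero]
    omega
  · simp only [Set.mem_singleton_iff, Prod.ext_iff, Prod.fst_zero, Prod.snd_zero] at hx
    omega

theorem mk_zero_mem_Tset {j : ℤ} (h0 : 0 ≤ j) (hk : j ≤ k) : ((j, 0) : Z2) ∈ Tset k l :=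
  Or.inl ⟨h0, hk, rfl⟩

theorem mk_one_mem_Tset {j : ℤ} (h0 : 0 ≤ j) (hl : j ≤ l) : ((j, 1) : Z2) ∈ Tset k l :=
  Or.inr ⟨h0, hl, rfl⟩

theorem forall_mem_Tset {P : Z2 → Prop} :
    (∀ t ∈ Tset k l, P t) ↔
      (∀ j, 0 ≤ j → j ≤ k → P (j, 0)) ∧ (∀ j, 0 ≤ j → j ≤ l → P (j, 1)) := by
  refine ⟨fun h => ⟨fun j h0 hk => h _ (mk_zero_mem_Tset h0 hk),
    fun j h0 hl => h _ (mk_one_mem_Tset h0 hl)⟩, ?_⟩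
  rintro ⟨h₀, h₁⟩ ⟨j, _⟩ (⟨hj0, hjk, rfl⟩ | ⟨hj0, hjl, rfl⟩)
  exacts [h₀ j hj0 hjk, h₁ j hj0 hjl]

theorem eq_of_sub_eq_wOne_add_two_smul_wTwo (hkl : k = l + 1) {s : Z2} {x y : ℤ}
    (h : s - (x, y) = wOne k + (2 : ℤ) • wTwo l) : s = (x + l, y + 3) := by
  rw [sub_eq_iff_eq_add.mp h]
  simp only [wOne, wTwo, Prod.smul_mk, smul_eq_mul, Prod.mk_add_mk, Prod.mk.injEq]
  omega

theorem eq_of_sub_eq_two_smul_wOne_add_wTwo (hkl : k = l + 1) {s : Z2} {x y : ℤ}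
    (h : s - (x, y) = (2 : ℤ) • wOne k + wTwo l) : s = (x - l - 3, y + 3) := by
  rw [sub_eq_iff_eq_add.mp h]
  simp only [wOne, wTwo, Prod.smul_mk, smul_eq_mul, Prod.mk_add_mk, Prod.mk.injEq]
  omega

theorem add_wTwo_mem_of_sub_eq_wOne_add_two_smul_wTwo (hl : 0 ≤ l) (hkl : k = l + 1)
    (hdir : directSum S (Tset k l)) (hconv : latticeConvex (S + Tset k l)) {s s' : Z2}
    (hs : s ∈ S) (hs' : s' ∈ S) (h : s - s' = wOne k + (2 : ℤ) • wTwo l) :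
    s' + wTwo l ∈ S := by
  obtain ⟨x, y⟩ := s'
  obtain rfl := eq_of_sub_eq_wOne_add_two_smul_wTwo hkl h
  refine hdir.mem_of_add_mem (t₀ := (0, 0)) ?_ (forall_mem_Tset.mpr ⟨?_, ?_⟩)
  · refine hconv.mem_of_smul_eq (m := 2) (n := 1)
      (Set.add_mem_add hs' (mk_zero_mem_Tset (j := k) (by omega) le_rfl))
      (Set.add_mem_add hs (mk_zero_mem_Tset (j := 1) (by omega) (by omega)))
      (by norm_num) (by norm_num) (by norm_num) ?_
    simp only [wTwo, Prod.smul_mk, smul_eq_mul, Prod.mk_add_mk, Prod.mk.injEq]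
    omega
  · intro j hj0 hjk hne
    refine ⟨(x, y), hs', mem_Tset_sub_Tset_sdiff_zero hl (by omega) ?_⟩
    simp only [wTwo, Prod.mk_add_mk, Prod.mk_sub_mk, ne_eq, Prod.mk.injEq, and_true] at hne ⊢
    omega
  · intro j hj0 hjl _
    refine ⟨(x, y), hs', mem_Tset_sub_Tset_sdiff_zero hl (by omega) ?_⟩
    simp only [wTwo, Prod.mk_add_mk, Prod.mk_sub_mk]
    omega

theorem add_wOne_add_wTwo_mem_of_sub_eq_wOne_add_two_smul_wTwo (hl : 0 ≤ l) (hkl : k = l + 1)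
    (hdir : directSum S (Tset k l)) (hconv : latticeConvex (S + Tset k l)) {s s' : Z2}
    (hs : s ∈ S) (hs' : s' ∈ S) (h : s - s' = wOne k + (2 : ℤ) • wTwo l) :
    s' + wOne k + wTwo l ∈ S := by
  obtain ⟨x, y⟩ := s'
  obtain rfl := eq_of_sub_eq_wOne_add_two_smul_wTwo hkl h
  refine hdir.mem_of_add_mem (t₀ := (k, 0)) ?_ (forall_mem_Tset.mpr ⟨?_, ?_⟩)
  · refine hconv.mem_of_smul_eq (m := 1) (n := 1)
      (Set.add_mem_add hs' (mk_one_mem_Tset (j := l) hl le_rfl))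
      (Set.add_mem_add hs (mk_zero_mem_Tset (j := 0) le_rfl (by omega)))
      (by norm_num) (by norm_num) (by norm_num) ?_
    simp only [wOne, wTwo, Prod.smul_mk, smul_eq_mul, Prod.mk_add_mk, Prod.mk.injEq]
    omega
  · intro j hj0 hjk hne
    refine ⟨_, hs, mem_Tset_sub_Tset_sdiff_zero hl (by omega) ?_⟩
    simp only [wOne, wTwo, Prod.mk_add_mk, Prod.mk_sub_mk, ne_eq, Prod.mk.injEq, and_true] at hne ⊢
    omega
  · intro j hj0 hjl _
    refine ⟨(x, y), hs', mem_Tset_sub_Tset_sdiff_zero hl (by omega) ?_⟩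
    simp only [wOne, wTwo, Prod.mk_add_mk, Prod.mk_sub_mk]
    omega

theorem add_wOne_mem_of_sub_eq_two_smul_wOne_add_wTwo (hl : 0 ≤ l) (hkl : k = l + 1)
    (hdir : directSum S (Tset k l)) (hconv : latticeConvex (S + Tset k l)) {s s' : Z2}
    (hs : s ∈ S) (hs' : s' ∈ S) (h : s - s' = (2 : ℤ) • wOne k + wTwo l) :
    s' + wOne k ∈ S := by
  obtain ⟨x, y⟩ := s'
  obtain rfl := eq_of_sub_eq_two_smul_wOne_add_wTwo hkl h
  refine hdir.mem_of_add_mem (t₀ := (k, 0)) ?_ (forall_mem_Tset.mpr ⟨?_, ?_⟩)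
  · refine hconv.mem_of_smul_eq (m := 2) (n := 1)
      (Set.add_mem_add hs' (mk_zero_mem_Tset (j := 0) le_rfl (by omega)))
      (Set.add_mem_add hs (mk_zero_mem_Tset (j := l) hl (by omega)))
      (by norm_num) (by norm_num) (by norm_num) ?_
    simp only [wOne, Prod.smul_mk, smul_eq_mul, Prod.mk_add_mk, Prod.mk.injEq]
    omega
  · intro j hj0 hjk hne
    refine ⟨(x, y), hs', mem_Tset_sub_Tset_sdiff_zero hl (by omega) ?_⟩
    simp only [wOne, Prod.mk_add_mk, Prod.mk_sub_mk, ne_eq, Prod.mk.injEq, and_true] at hne ⊢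
    omega
  · intro j hj0 hjl _
    refine ⟨(x, y), hs', mem_Tset_sub_Tset_sdiff_zero hl (by omega) ?_⟩
    simp only [wOne, Prod.mk_add_mk, Prod.mk_sub_mk]
    omega

theorem add_wOne_add_wTwo_mem_of_sub_eq_two_smul_wOne_add_wTwo (hl : 0 ≤ l) (hkl : k = l + 1)
    (hdir : directSum S (Tset k l)) (hconv : latticeConvex (S + Tset k l)) {s s' : Z2}
    (hs : s ∈ S) (hs' : s' ∈ S) (h : s - s' = (2 : ℤ) • wOne k + wTwo l) :
    s' + wOne k + wTwo l ∈ S := by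
  obtain ⟨x, y⟩ := s'
  obtain rfl := eq_of_sub_eq_two_smul_wOne_add_wTwo hkl h
  refine hdir.mem_of_add_mem (t₀ := (0, 0)) ?_ (forall_mem_Tset.mpr ⟨?_, ?_⟩)
  · refine hconv.mem_of_smul_eq (m := 1) (n := 1)
      (Set.add_mem_add hs' (mk_one_mem_Tset (j := l) hl le_rfl))
      (Set.add_mem_add hs (mk_zero_mem_Tset (j := 1) (by omega) (by omega)))
      (by norm_num) (by norm_num) (by norm_num) ?_
    simp only [wOne, wTwo, Prod.smul_mk, smul_eq_mul, Prod.mk_add_mk, Prod.mk.injEq]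
    omega
  · intro j hj0 hjk hne
    refine ⟨_, hs, mem_Tset_sub_Tset_sdiff_zero hl (by omega) ?_⟩
    simp only [wOne, wTwo, Prod.mk_add_mk, Prod.mk_sub_mk, ne_eq, Prod.mk.injEq, and_true] at hne ⊢
    omega
  · intro j hj0 hjl _
    refine ⟨(x, y), hs', mem_Tset_sub_Tset_sdiff_zero hl (by omega) ?_⟩
    simp only [wOne, wTwo, Prod.mk_add_mk, Prod.mk_sub_mk]
    omega

end

theorem neighbor_forced_III_IV_general
    (k l : ℤ) (hl : 0 ≤ l) (hkl : k = l + 1)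
    (S : Set Z2) (hdir : directSum S (Tset k l))
    (hconv : latticeConvex (S + Tset k l)) :
    ∀ s ∈ S, ∀ s' ∈ S,
      ((s - s' = wOne k + (2 : ℤ) • wTwo l →
          s' + wTwo l ∈ S ∧ s' + wOne k + wTwo l ∈ S) ∧
        (s - s' = (2 : ℤ) • wOne k + wTwo l →
          s' + wOne k ∈ S ∧ s' + wOne k + wTwo l ∈ S)) :=
  fun _s hs _s' hs' =>
    ⟨fun h => ⟨add_wTwo_mem_of_sub_eq_wOne_add_two_smul_wTwo hl hkl hdir hconv hs hs' h,
        add_wOne_add_wTwo_mem_of_sub_eq_wOne_add_two_smul_wTwo hl hkl hdir hconv hs hs' h⟩,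
      fun h => ⟨add_wOne_mem_of_sub_eq_two_smul_wOne_add_wTwo hl hkl hdir hconv hs hs' h,
        add_wOne_add_wTwo_mem_of_sub_eq_two_smul_wOne_add_wTwo hl hkl hdir hconv hs hs' h⟩⟩

/-- for `k − ℓ = 1`, if `s − s' = w₁ + 2w₂` then
`s' + w₂, s' + w₁ + w₂ ∈ S`, and if `s − s' = 2w₁ + w₂` then
`s' + w₁, s' + w₁ + w₂ ∈ S`. -/
theorem neighbor_forced_III_IV
    (k l : ℤ) (hl : 0 ≤ l) (hkl : k = l + 1)
    (S : Set Z2) (hSne : S.Nonempty) (hdir : directSum S (Tset k l))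
    (hconv : latticeConvex (S + Tset k l)) :
    ∀ s ∈ S, ∀ s' ∈ S,
      ((s - s' = wOne k + (2 : ℤ) • wTwo l →
          s' + wTwo l ∈ S ∧ s' + wOne k + wTwo l ∈ S) ∧
        (s - s' = (2 : ℤ) • wOne k + wTwo l →
          s' + wOne k ∈ S ∧ s' + wOne k + wTwo l ∈ S)) :=
  neighbor_forced_III_IV_general k l hl hkl S hdir hconv
end

section
/- Let k − ℓ > 1 and let S ⊆ 𝕃 be such that the graph G_S is connected and such that for all s, s' ∈ S: (a) s − s' = w₂ − w₁ implies s' − w₁ ∈ S and s' + w₂ ∈ S; (b) s − s' = w₂ + w₁ implies s' + w₁ ∈ S and s' + w₂ ∈ S. Then there exist order-convex subsets (intervals) A, B ⊆ ℤ such that S = {i w₁ + j w₂ : i ∈ A, j ∈ B}; equivalently, S = {i w₁ + j w₂ : i, j ∈ ℤ, α₁ ≤ i ≤ α₂, β₁ ≤ j ≤ β₂} for some α₁, α₂, β₁, β₂ ∈ ℤ ∪ {−∞, +∞}. -/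
open scoped Pointwise ENNReal

/-! The integer coordinates `(i, j)` of `S` with respect to `w₁, w₂` form a set `T ⊆ ℤ²` in
which the edges of `G_S` become the unit steps of the square grid (this is where `k − ℓ > 1`
enters: the diagonal `w₁ + w₂` is not an edge), and the two completion rules say that two
diagonally opposite corners of a unit square in `T` force the other two. For such a `T`,
induction along a grid path from `a` to `b` shows that the whole box spanned by `a` and `b` lies
in `T`: a step that leaves the current box adds one new column (or row) of it, which is filled
square by square. Applied to `(i, j')` and `(i', j)` in `T`, this puts `(i, j)` in `T`, so `T` is
the product of its two projections, and these are intervals. -/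

open Set Relation

def SquareClosed (T : Set (ℤ × ℤ)) : Prop :=
  ∀ p ∈ T, ∀ q ∈ T, (p.1 - q.1).natAbs = 1 → (p.2 - q.2).natAbs = 1 → (p.1, q.2) ∈ T

def GridStep (T : Set (ℤ × ℤ)) (p q : ℤ × ℤ) : Prop :=
  p ∈ T ∧ q ∈ T ∧ (p.1 - q.1).natAbs + (p.2 - q.2).natAbs = 1

namespace SquareClosed

variable {T : Set (ℤ × ℤ)}

lemma preimage_swap (hT : SquareClosed T) : SquareClosed (Prod.swap ⁻¹' T) :=
  fun p hp q hq h₁ h₂ => hT q.swap hq p.swap hp (by simp only [Prod.fst_swap]; omega)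
    (by simp only [Prod.snd_swap]; omega)

lemma mem_of_column (hT : SquareClosed T) {x x' y₀ y₁ : ℤ} (hx : (x' - x).natAbs = 1)
    (hcol : ∀ y ∈ uIcc y₀ y₁, (x, y) ∈ T) (hend : (x', y₁) ∈ T) :
    ∀ y ∈ uIcc y₀ y₁, (x', y) ∈ T := by
  intro y hy
  induction h : (y - y₁).natAbs using Nat.strong_induction_on generalizing y with
  | _ n ih =>
    rcases eq_or_ne y y₁ with rfl | hne
    · exact hend
    obtain ⟨y', hy', hstep, hcloser⟩ :
        ∃ y' ∈ uIcc y₀ y₁, (y' - y).natAbs = 1 ∧ (y' - y₁).natAbs < n := by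
      rw [mem_uIcc] at hy
      rcases hne.lt_or_gt with hlt | hgt
      · exact ⟨y + 1, by rw [mem_uIcc]; omega, by omega, by omega⟩
      · exact ⟨y - 1, by rw [mem_uIcc]; omega, by omega, by omega⟩
    exact hT _ (ih _ hcloser y' hy' rfl) _ (hcol y hy) hx hstep

lemma uIcc_subset_of_step_fst (hT : SquareClosed T) {a m c : ℤ × ℤ} (hbox : uIcc a m ⊆ T)
    (hc : c ∈ T) (h₁ : (c.1 - m.1).natAbs = 1) (h₂ : c.2 = m.2) : uIcc a c ⊆ T := by
  rintro ⟨x, y⟩ hp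
  rw [uIcc_prod_eq, mem_prod, h₂] at hp
  have hcol : ∀ y ∈ uIcc a.2 m.2, (m.1, y) ∈ T := fun y hy =>
    hbox (by rw [uIcc_prod_eq]; exact ⟨right_mem_uIcc, hy⟩)
  by_cases hx : x ∈ uIcc a.1 m.1
  · exact hbox (by rw [uIcc_prod_eq]; exact ⟨hx, hp.2⟩)
  · obtain rfl : x = c.1 := by simp only [mem_uIcc] at hp hx; omega
    exact hT.mem_of_column h₁ hcol (h₂ ▸ hc) y hp.2

lemma uIcc_subset_of_step_snd (hT : SquareClosed T) {a m c : ℤ × ℤ} (hbox : uIcc a m ⊆ T)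
    (hc : c ∈ T) (h₁ : c.1 = m.1) (h₂ : (c.2 - m.2).natAbs = 1) : uIcc a c ⊆ T := by
  have hswap : ∀ u v : ℤ × ℤ, uIcc u.swap v.swap = Prod.swap ⁻¹' uIcc u v := fun u v => by
    ext p; simp only [uIcc_prod_eq, mem_prod, mem_preimage, Prod.fst_swap, Prod.snd_swap, and_comm]
  have := hT.preimage_swap.uIcc_subset_of_step_fst (a := a.swap) (m := m.swap) (c := c.swap)
    (by rw [hswap]; exact preimage_mono hbox) hc h₂ h₁
  rw [hswap] at this
  intro p hp
  simpa using this (show p.swap ∈ Prod.swap ⁻¹' uIcc a c by simpa using hp)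

theorem uIcc_subset (hT : SquareClosed T) {a b : ℤ × ℤ} (ha : a ∈ T)
    (hab : ReflTransGen (GridStep T) a b) : uIcc a b ⊆ T := by
  induction hab with
  | refl => simpa using ha
  | @tail m c _ hstep ih =>
    obtain ⟨-, hc, hd⟩ := hstep
    rcases (by omega : (c.1 - m.1).natAbs = 1 ∧ c.2 = m.2 ∨
        c.1 = m.1 ∧ (c.2 - m.2).natAbs = 1) with ⟨h₁, h₂⟩ | ⟨h₁, h₂⟩
    · exact hT.uIcc_subset_of_step_fst ih hc h₁ h₂
    · exact hT.uIcc_subset_of_step_snd ih hc h₁ h₂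

theorem exists_ordConnected_eq_prod (hT : SquareClosed T)
    (hconn : ∀ p ∈ T, ∀ q ∈ T, ReflTransGen (GridStep T) p q) :
    ∃ A B : Set ℤ, A.OrdConnected ∧ B.OrdConnected ∧ T = A ×ˢ B := by
  have hbox : ∀ p ∈ T, ∀ q ∈ T, uIcc p.1 q.1 ×ˢ uIcc p.2 q.2 ⊆ T := fun p hp q hq => by
    rw [← uIcc_prod_eq]; exact hT.uIcc_subset hp (hconn p hp q hq)
  refine ⟨Prod.fst '' T, Prod.snd '' T, ⟨?_⟩, ⟨?_⟩, ?_⟩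
  · rintro _ ⟨p, hp, rfl⟩ _ ⟨q, hq, rfl⟩ x hx
    exact ⟨(x, p.2), hbox p hp q hq ⟨Icc_subset_uIcc hx, left_mem_uIcc⟩, rfl⟩
  · rintro _ ⟨p, hp, rfl⟩ _ ⟨q, hq, rfl⟩ y hy
    exact ⟨(p.1, y), hbox p hp q hq ⟨left_mem_uIcc, Icc_subset_uIcc hy⟩, rfl⟩
  · refine Subset.antisymm (fun p hp => ⟨⟨p, hp, rfl⟩, ⟨p, hp, rfl⟩⟩) ?_
    rintro ⟨x, y⟩ ⟨⟨p, hp, rfl⟩, ⟨q, hq, rfl⟩⟩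
    exact hbox p hp q hq ⟨left_mem_uIcc, right_mem_uIcc⟩

end SquareClosed

def gridPoint (k l : ℤ) (p : ℤ × ℤ) : Z2 := p.1 • wOne k + p.2 • wTwo l

section Lattice

variable {k l : ℤ} {S : Set Z2}

lemma ZLat_eq_range : ZLat k l = range (gridPoint k l) := by
  ext p
  simp [ZLat, gridPoint, eq_comm]

lemma gridPoint_sub (p q : ℤ × ℤ) :
    gridPoint k l (p - q) = gridPoint k l p - gridPoint k l q := by
  simp only [gridPoint, Prod.fst_sub, Prod.snd_sub]
  module

lemma gridPoint_injective (h : k + l + 2 ≠ 0) : Function.Injective (gridPoint k l) := by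
  rintro ⟨i, j⟩ ⟨i', j'⟩ hij
  simp only [gridPoint, wOne, wTwo, Prod.smul_mk, smul_eq_mul, Prod.mk_add_mk,
    Prod.mk.injEq] at hij
  obtain ⟨h₁, h₂⟩ := hij
  have hi : (i - i') * (k + l + 2) = 0 := by linear_combination -h₁ + (l + 1) * h₂
  obtain rfl : i = i' := by simpa [h, sub_eq_zero] using hi
  obtain rfl : j = j' := by omega
  rfl

lemma image_gridPoint_prod (A B : Set ℤ) :
    gridPoint k l '' A ×ˢ B =
      {p : Z2 | ∃ i ∈ A, ∃ j ∈ B, p = i • wOne k + j • wTwo l} := by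
  ext p
  constructor
  · rintro ⟨⟨i, j⟩, ⟨hi, hj⟩, rfl⟩
    exact ⟨i, hi, j, hj, rfl⟩
  · rintro ⟨i, hi, j, hj, rfl⟩
    exact ⟨(i, j), ⟨hi, hj⟩, rfl⟩

lemma squareClosed_preimage_gridPoint
    (ha : ∀ s ∈ S, ∀ s' ∈ S, s - s' = wTwo l - wOne k →
      s' - wOne k ∈ S ∧ s' + wTwo l ∈ S)
    (hb : ∀ s ∈ S, ∀ s' ∈ S, s - s' = wTwo l + wOne k →
      s' + wOne k ∈ S ∧ s' + wTwo l ∈ S) :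
    SquareClosed (gridPoint k l ⁻¹' S) := by
  rintro ⟨i, j⟩ hp ⟨i', j'⟩ hq h₁ h₂
  simp only [mem_preimage, gridPoint] at hp hq h₁ h₂ ⊢
  rcases (by omega : i = i' + 1 ∨ i = i' - 1) with rfl | rfl <;>
    rcases (by omega : j = j' + 1 ∨ j = j' - 1) with rfl | rfl
  · convert (hb _ hp _ hq (by module)).1 using 1; module
  · convert (ha _ hq _ hp (by module)).2 using 1; module
  · convert (ha _ hp _ hq (by module)).1 using 1; module
  · convert (hb _ hq _ hp (by module)).2 using 1; module

lemma gridStep_of_adjStep (hinj : Function.Injective (gridPoint k l)) (hkl : k ≠ l + 1)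
    {p q : ℤ × ℤ} (h : adjStep k l S (gridPoint k l p) (gridPoint k l q)) :
    GridStep (gridPoint k l ⁻¹' S) p q := by
  obtain ⟨hp, hq, hdir⟩ := h
  refine ⟨hp, hq, ?_⟩
  obtain ⟨u, hu, hqp⟩ : ∃ u : ℤ × ℤ, u.1.natAbs + u.2.natAbs = 1 ∧
      gridPoint k l (q - p) = gridPoint k l u := by
    rw [gridPoint_sub]
    rcases hdir with h | h | h | h | ⟨hk, -⟩
    · exact ⟨(1, 0), rfl, by rw [h]; simp [gridPoint]⟩
    · exact ⟨(-1, 0), rfl, by rw [h]; simp [gridPoint]⟩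
    · exact ⟨(0, 1), rfl, by rw [h]; simp [gridPoint]⟩
    · exact ⟨(0, -1), rfl, by rw [h]; simp [gridPoint]⟩
    · exact absurd hk hkl
  rw [← hinj hqp, Prod.fst_sub, Prod.snd_sub] at hu
  omega

lemma GConnected.reflTransGen_gridStep (hconn : GConnected k l S)
    (hinj : Function.Injective (gridPoint k l)) (hkl : k ≠ l + 1)
    (hS : S ⊆ range (gridPoint k l)) :
    ∀ p ∈ gridPoint k l ⁻¹' S, ∀ q ∈ gridPoint k l ⁻¹' S,
      ReflTransGen (GridStep (gridPoint k l ⁻¹' S)) p q := by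
  intro p hp q hq
  have hlift := ReflTransGen.lift (p := GridStep (gridPoint k l ⁻¹' S))
    (Function.invFun (gridPoint k l)) (fun s t hst => ?_) _ _ (hconn _ hp _ hq)
  · simpa only [Function.onFun, Function.leftInverse_invFun hinj _] using hlift
  · apply gridStep_of_adjStep hinj hkl
    rwa [Function.invFun_eq (hS hst.1), Function.invFun_eq (hS hst.2.1)]

end Lattice

/-- for `k − ℓ > 1`, a connected `S ⊆ 𝕃` satisfying the two
completion rules is a grid: `S = {i w₁ + j w₂ : i ∈ A, j ∈ B}` for intervals
`A, B ⊆ ℤ`. -/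
theorem grid_graph_characterization
    (k l : ℤ) (hl : 0 ≤ l) (hkl : l + 1 < k)
    (S : Set Z2) (hS : S ⊆ ZLat k l)
    (hconn : GConnected k l S)
    (ha : ∀ s ∈ S, ∀ s' ∈ S, s - s' = wTwo l - wOne k →
      s' - wOne k ∈ S ∧ s' + wTwo l ∈ S)
    (hb : ∀ s ∈ S, ∀ s' ∈ S, s - s' = wTwo l + wOne k →
      s' + wOne k ∈ S ∧ s' + wTwo l ∈ S) :
    ∃ A B : Set ℤ, A.OrdConnected ∧ B.OrdConnected ∧
      S = {p : Z2 | ∃ i ∈ A, ∃ j ∈ B, p = i • wOne k + j • wTwo l} := by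
  rw [ZLat_eq_range] at hS
  have hinj : Function.Injective (gridPoint k l) := gridPoint_injective (by omega)
  obtain ⟨A, B, hA, hB, hT⟩ :=
    (squareClosed_preimage_gridPoint ha hb).exists_ordConnected_eq_prod
      (hconn.reflTransGen_gridStep hinj hkl.ne' hS)
  refine ⟨A, B, hA, hB, ?_⟩
  rw [← image_gridPoint_prod, ← hT, image_preimage_eq_of_subset hS]
end

section
/- Let k − ℓ = 1 and let S ⊆ 𝕃 be such that the graph G_S is connected and such that for all s, s' ∈ S: (a) s − s' = w₂ − w₁ implies s' − w₁ ∈ S and s' + w₂ ∈ S; (b) s − s' = w₁ + 2w₂ implies s' + w₂ ∈ S and s' + w₁ + w₂ ∈ S; (c) s − s' = 2w₁ + w₂ implies s' + w₁ ∈ S and s' + w₁ + w₂ ∈ S. Then S = {i w₁ + j w₂ : i, j ∈ ℤ, α₁ ≤ i ≤ α₂, β₁ ≤ j ≤ β₂, γ₁ ≤ i − j ≤ γ₂} for some α₁, α₂, β₁, β₂, γ₁, γ₂ ∈ ℤ ∪ {−∞, +∞}. -/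
open scoped Pointwise ENNReal

/-!
In the coordinates `(i, j) ↦ i • w₁ + j • w₂`, `𝕃` becomes the triangular lattice `ℤ²` with
neighbours `±(1, 0), ±(1, 1), ±(0, 1)`, the graph `G_S` becomes its nearest-neighbour graph, and
the rules (a)–(c) say that whenever two points of `S` are opposite vertices of a unit rhombus, the
other two vertices lie in `S` as well.

Such a set swallows hexagons: if a hexagon contained in `S` attains all six of its bounds and a
point `t ∈ S` is adjacent to it, then the smallest hexagon containing both still lies in `S`. Each
new row is filled point by point, starting from `t`, by completing rhombi whose opposite vertex
lies on the old side; by the six-fold rotational symmetry of the lattice one side is enough. Growing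
hexagons along paths in `G_S` puts any finitely many points of `S` into a hexagon contained in
`S`, so every point within the six extents of `S` lies in `S`.
-/

theorem exists_withTop_coe_le_iff {s : Set ℤ} (hs : s.Nonempty) :
    ∃ a : WithTop ℤ, ∀ n : ℤ, (n : WithTop ℤ) ≤ a ↔ ∃ m ∈ s, n ≤ m := by
  by_cases hbdd : BddAbove s
  · refine ⟨(sSup s : ℤ), fun n => ⟨fun h => ?_, fun ⟨m, hm, hnm⟩ => ?_⟩⟩
    · exact ⟨sSup s, Int.csSup_mem hs hbdd, WithTop.coe_le_coe.1 h⟩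
    · exact WithTop.coe_le_coe.2 (hnm.trans (le_csSup hbdd hm))
  · exact ⟨⊤, fun n => iff_of_true le_top
      ((not_bddAbove_iff.1 hbdd n).imp fun _ h => ⟨h.1, h.2.le⟩)⟩

theorem exists_withBot_le_coe_iff {s : Set ℤ} (hs : s.Nonempty) :
    ∃ a : WithBot ℤ, ∀ n : ℤ, a ≤ (n : WithBot ℤ) ↔ ∃ m ∈ s, m ≤ n := by
  by_cases hbdd : BddBelow s
  · refine ⟨(sInf s : ℤ), fun n => ⟨fun h => ?_, fun ⟨m, hm, hmn⟩ => ?_⟩⟩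
    · exact ⟨sInf s, Int.csInf_mem hs hbdd, WithBot.coe_le_coe.1 h⟩
    · exact WithBot.coe_le_coe.2 ((csInf_le hbdd hm).trans hmn)
  · exact ⟨⊥, fun n => iff_of_true bot_le
      ((not_bddBelow_iff.1 hbdd n).imp fun _ h => ⟨h.1, h.2.le⟩)⟩

namespace TriangularLattice

def dir : Fin 6 → ℤ × ℤ := ![(1, 0), (1, 1), (0, 1), (-1, 0), (-1, -1), (0, -1)]

/-- The linear forms cutting out hexagons: `{α₁ ≤ x ≤ α₂, β₁ ≤ y ≤ β₂, γ₁ ≤ x - y ≤ γ₂}` is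
`hexagon ![α₂, β₂, -γ₁, -α₁, -β₁, γ₂]`. -/
def coord : Fin 6 → ℤ × ℤ →+ ℤ :=
  ![AddMonoidHom.fst ℤ ℤ, AddMonoidHom.snd ℤ ℤ, AddMonoidHom.snd ℤ ℤ - AddMonoidHom.fst ℤ ℤ,
    -AddMonoidHom.fst ℤ ℤ, -AddMonoidHom.snd ℤ ℤ, AddMonoidHom.fst ℤ ℤ - AddMonoidHom.snd ℤ ℤ]

@[simp] theorem coord_zero (p : ℤ × ℤ) : coord 0 p = p.1 := rfl
@[simp] theorem coord_one (p : ℤ × ℤ) : coord 1 p = p.2 := rfl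
@[simp] theorem coord_two (p : ℤ × ℤ) : coord 2 p = p.2 - p.1 := rfl
@[simp] theorem coord_three (p : ℤ × ℤ) : coord 3 p = -p.1 := rfl
@[simp] theorem coord_four (p : ℤ × ℤ) : coord 4 p = -p.2 := rfl
@[simp] theorem coord_five (p : ℤ × ℤ) : coord 5 p = p.1 - p.2 := rfl

def hexagon (c : Fin 6 → ℤ) : Set (ℤ × ℤ) := {p | ∀ d, coord d p ≤ c d}

def IsTight (c : Fin 6 → ℤ) : Prop := ∀ d, ∃ p ∈ hexagon c, coord d p = c d

def RhombusClosed (T : Set (ℤ × ℤ)) : Prop :=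
  ∀ a ∈ T, ∀ b ∈ T, ∀ d, b - a = dir d + dir (d + 1) → a + dir d ∈ T ∧ a + dir (d + 1) ∈ T

def Adj (T : Set (ℤ × ℤ)) (a b : ℤ × ℤ) : Prop := a ∈ T ∧ b ∈ T ∧ b - a ∈ Set.range dir

def AdjConnected (T : Set (ℤ × ℤ)) : Prop :=
  ∀ p ∈ T, ∀ q ∈ T, Relation.ReflTransGen (Adj T) p q

def rot : ℤ × ℤ ≃+ ℤ × ℤ where
  toFun p := (p.1 - p.2, p.1)
  invFun p := (p.2, p.2 - p.1)
  left_inv p := by simp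
  right_inv p := by simp
  map_add' p q := Prod.ext (by simp only [Prod.fst_add, Prod.snd_add]; ring) rfl

theorem rot_apply (p : ℤ × ℤ) : rot p = (p.1 - p.2, p.1) := rfl

theorem coord_rot (d : Fin 6) (p : ℤ × ℤ) : coord (d + 1) (rot p) = coord d p := by
  fin_cases d <;> simp [coord, rot_apply]

theorem coord_rot_symm (d : Fin 6) (p : ℤ × ℤ) : coord d (rot.symm p) = coord (d + 1) p := by
  rw [← coord_rot, AddEquiv.apply_symm_apply]

theorem rot_dir (d : Fin 6) : rot (dir d) = dir (d + 1) := by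
  fin_cases d <;> rfl

theorem coord_dir_le_one (d d' : Fin 6) : coord d (dir d') ≤ 1 := by
  fin_cases d <;> fin_cases d' <;> decide

theorem mem_hexagon_iff {c : Fin 6 → ℤ} {p : ℤ × ℤ} :
    p ∈ hexagon c ↔ p.1 ≤ c 0 ∧ p.2 ≤ c 1 ∧ p.2 - p.1 ≤ c 2 ∧ -p.1 ≤ c 3 ∧ -p.2 ≤ c 4 ∧
      p.1 - p.2 ≤ c 5 := by
  simp [hexagon, Fin.forall_fin_succ, coord]

theorem hexagon_mono : Monotone hexagon :=
  fun _ _ h _ hp d => (hp d).trans (h d)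

theorem rot_mem_hexagon {c : Fin 6 → ℤ} {p : ℤ × ℤ} :
    rot p ∈ hexagon c ↔ p ∈ hexagon (fun d => c (d + 1)) := by
  simp only [hexagon, Set.mem_ofPred_eq]
  rw [← (Equiv.addRight (1 : Fin 6)).forall_congr_right]
  simp only [Equiv.coe_addRight, coord_rot]

theorem eq_of_mem_hexagon_coord {a p : ℤ × ℤ} (hp : p ∈ hexagon fun d => coord d a) : p = a := by
  rw [mem_hexagon_iff] at hp
  simp only [coord_zero, coord_one, coord_three, coord_four] at hp
  exact Prod.ext (by omega) (by omega)

theorem mem_hexagon_add_one {c : Fin 6 → ℤ} {m q : ℤ × ℤ} (hm : m ∈ hexagon c)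
    (hmq : q - m ∈ Set.range dir) : q ∈ hexagon (c + 1) := by
  obtain ⟨d', hd'⟩ := hmq
  intro d
  rw [← sub_add_cancel q m, ← hd', map_add, add_comm]
  exact add_le_add (hm d) (coord_dir_le_one d d')

theorem IsTight.shift {c : Fin 6 → ℤ} (hc : IsTight c) : IsTight (fun d => c (d + 1)) := by
  intro d
  obtain ⟨p, hp, hpd⟩ := hc (d + 1)
  refine ⟨rot.symm p, ?_, by rw [coord_rot_symm, hpd]⟩
  rwa [← rot_mem_hexagon, AddEquiv.apply_symm_apply]

theorem IsTight.sup {c : Fin 6 → ℤ} (hc : IsTight c) (t : ℤ × ℤ) :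
    IsTight (c ⊔ fun d => coord d t) := by
  intro d
  rcases le_total (coord d t) (c d) with h | h
  · obtain ⟨p, hp, hpd⟩ := hc d
    exact ⟨p, hexagon_mono le_sup_left hp, by simp [hpd, h]⟩
  · exact ⟨t, fun d' => le_sup_right, by simp [h]⟩

/-- The rule for `d + 3` is the rule for `d` with `a` and `b` exchanged. -/
theorem RhombusClosed.of_forall_lt_three {T : Set (ℤ × ℤ)}
    (h : ∀ a ∈ T, ∀ b ∈ T, ∀ d : Fin 6, d < 3 → b - a = dir d + dir (d + 1) →
      a + dir d ∈ T ∧ a + dir (d + 1) ∈ T) : RhombusClosed T := by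
  intro a ha b hb d hab
  obtain rfl : b = a + (dir d + dir (d + 1)) := by rw [← hab]; abel
  fin_cases d
  · exact h a ha _ hb 0 (by decide) (by simp)
  · exact h a ha _ hb 1 (by decide) (by simp)
  · exact h a ha _ hb 2 (by decide) (by simp)
  · simpa [dir, add_assoc] using (h _ hb a ha 0 (by decide) (by simp [dir])).symm
  · simpa [dir, add_assoc] using (h _ hb a ha 1 (by decide) (by simp [dir])).symm
  · simpa [dir, add_assoc] using (h _ hb a ha 2 (by decide) (by simp [dir])).symm

theorem RhombusClosed.preimage_rot {T : Set (ℤ × ℤ)} (hT : RhombusClosed T) :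
    RhombusClosed (rot ⁻¹' T) := by
  intro a ha b hb d hab
  have hrot : rot b - rot a = dir (d + 1) + dir (d + 1 + 1) := by
    rw [← map_sub, hab, map_add, rot_dir, rot_dir]
  simpa only [Set.mem_preimage, map_add, rot_dir] using hT _ ha _ hb (d + 1) hrot

section Filling

variable {T : Set (ℤ × ℤ)} {a j₀ j₁ : ℤ}

/-- Each step completes the rhombus with opposite vertices `(a + 1, j)` and `(a, j + 1)`. -/
theorem RhombusClosed.mem_of_walk_up (hT : RhombusClosed T) (h₀ : (a + 1, j₀) ∈ T)
    (hside : ∀ j, j₀ < j → j ≤ j₁ → (a, j) ∈ T) : ∀ j, j₀ ≤ j → j ≤ j₁ → (a + 1, j) ∈ T := by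
  refine Int.leInduction (fun _ => h₀) fun j hj ih hj₁ => ?_
  have hstep := hT _ (ih (by omega)) _ (hside (j + 1) (by omega) hj₁) 2 (by simp [dir])
  simpa [dir] using hstep.1

/-- Each step completes the rhombus with opposite vertices `(a, j - 2)` and `(a + 1, j)`. -/
theorem RhombusClosed.mem_of_walk_down (hT : RhombusClosed T) (h₀ : (a + 1, j₀) ∈ T)
    (hside : ∀ j, j₁ - 1 ≤ j → j ≤ j₀ - 2 → (a, j) ∈ T) :
    ∀ j, j ≤ j₀ → j₁ ≤ j → (a + 1, j) ∈ T := by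
  refine Int.leInductionDown (fun _ => h₀) fun j hj ih hj₁ => ?_
  have hstep := hT _ (hside (j - 2) (by omega) (by omega)) _ (ih (by omega)) 1 (by simp [dir])
  have hvertex : ((a, j - 2) + dir 1 : ℤ × ℤ) = (a + 1, j - 1) :=
    Prod.ext rfl (show j - 2 + 1 = j - 1 by ring)
  exact hvertex ▸ hstep.1

/-- By tightness, the right side of `hexagon c` is the whole segment `{c 0} × [c 0 - c 5, c 1]`,
along which the new column through `t` is filled. -/
theorem RhombusClosed.mem_of_coord_zero_eq (hT : RhombusClosed T) {c : Fin 6 → ℤ}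
    (hH : hexagon c ⊆ T) (hc : IsTight c) {t z : ℤ × ℤ} (htT : t ∈ T)
    (ht : t ∈ hexagon (c + 1)) (hz : z ∈ hexagon (c ⊔ fun d => coord d t))
    (hz₀ : coord 0 z = c 0 + 1) : z ∈ T := by
  obtain ⟨p₀, hp₀, hp₀c⟩ := hc 0
  obtain ⟨p₁, hp₁, hp₁c⟩ := hc 1
  obtain ⟨p₅, hp₅, hp₅c⟩ := hc 5
  obtain ⟨t₁, t₂⟩ := t
  obtain ⟨z₁, z₂⟩ := z
  rw [mem_hexagon_iff] at hp₀ hp₁ hp₅ ht hz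
  simp only [coord_zero, coord_one, coord_two, coord_three, coord_four, coord_five, Pi.add_apply,
    Pi.one_apply, Pi.sup_apply] at hp₀c hp₁c hp₅c ht hz hz₀
  have hside : ∀ j, c 0 - c 5 ≤ j → j ≤ c 1 → (c 0, j) ∈ T := fun j h₁ h₂ =>
    hH (mem_hexagon_iff.2 (by omega))
  obtain rfl : z₁ = c 0 + 1 := hz₀
  obtain rfl : t₁ = c 0 + 1 := by omega
  rcases le_total t₂ z₂ with h | h
  · exact hT.mem_of_walk_up htT (fun j _ _ => hside j (by omega) (by omega)) z₂ h le_rfl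
  · exact hT.mem_of_walk_down htT (fun j _ _ => hside j (by omega) (by omega)) z₂ h le_rfl

/-- Pulling back along `rot` turns side `d + 1` into side `d`. -/
theorem RhombusClosed.mem_of_coord_eq (hT : RhombusClosed T) {c : Fin 6 → ℤ}
    (hH : hexagon c ⊆ T) (hc : IsTight c) {t z : ℤ × ℤ} (htT : t ∈ T)
    (ht : t ∈ hexagon (c + 1)) (hz : z ∈ hexagon (c ⊔ fun d => coord d t)) {d : Fin 6}
    (hzd : coord d z = c d + 1) : z ∈ T := by
  induction d using Fin.induction generalizing T c t z with
  | zero => exact hT.mem_of_coord_zero_eq hH hc htT ht hz hzd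
  | succ d ih =>
    rw [← Fin.coeSucc_eq_succ] at hzd
    have hz' : rot.symm z ∈ rot ⁻¹' T := ih hT.preimage_rot (c := fun d => c (d + 1))
      (fun p hp => hH (rot_mem_hexagon.2 hp)) hc.shift (t := rot.symm t) (by simpa using htT)
      ((rot_mem_hexagon (c := c + 1)).1 (by simpa using ht)) ?_ ?_
    · simpa using hz'
    · simp only [coord_rot_symm]
      exact (rot_mem_hexagon (c := c ⊔ fun d => coord d t)).1 (by simpa using hz)
    · rwa [coord_rot_symm]

end Filling

section Growth

variable {T : Set (ℤ × ℤ)} {c : Fin 6 → ℤ}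

theorem RhombusClosed.hexagon_sup_subset (hT : RhombusClosed T) (hH : hexagon c ⊆ T)
    (hc : IsTight c) {t : ℤ × ℤ} (htT : t ∈ T) (ht : t ∈ hexagon (c + 1)) :
    hexagon (c ⊔ fun d => coord d t) ⊆ T := by
  intro z hz
  by_cases hzc : z ∈ hexagon c
  · exact hH hzc
  obtain ⟨d, hd⟩ : ∃ d, c d < coord d z := by simpa [hexagon] using hzc
  have hzd := hz d
  have htd := ht d
  simp only [Pi.sup_apply, Pi.add_apply, Pi.one_apply] at hzd htd
  exact hT.mem_of_coord_eq hH hc htT ht hz (d := d) (by omega)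

theorem RhombusClosed.exists_hexagon_of_reflTransGen (hT : RhombusClosed T) {r q : ℤ × ℤ}
    (hrq : Relation.ReflTransGen (Adj T) r q) (hH : hexagon c ⊆ T) (hc : IsTight c)
    (hr : r ∈ hexagon c) :
    ∃ c', c ≤ c' ∧ hexagon c' ⊆ T ∧ IsTight c' ∧ q ∈ hexagon c' := by
  induction hrq with
  | refl => exact ⟨c, le_rfl, hH, hc, hr⟩
  | tail _ hmq ih =>
    obtain ⟨c', hcc', hH', hc', hm⟩ := ih
    obtain ⟨-, hqT, hmq⟩ := hmq
    exact ⟨c' ⊔ fun d => coord d _, hcc'.trans le_sup_left,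
      hT.hexagon_sup_subset hH' hc' hqT (mem_hexagon_add_one hm hmq), hc'.sup _,
      fun d => le_sup_right⟩

theorem RhombusClosed.exists_hexagon_superset (hT : RhombusClosed T) (hconn : AdjConnected T)
    {F : Finset (ℤ × ℤ)} (hF : F.Nonempty) (hFT : ↑F ⊆ T) :
    ∃ c, hexagon c ⊆ T ∧ IsTight c ∧ ↑F ⊆ hexagon c := by
  induction hF using Finset.Nonempty.cons_induction with
  | singleton a =>
    refine ⟨fun d => coord d a, fun p hp => ?_, fun d => ⟨a, fun _ => le_rfl, rfl⟩, ?_⟩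
    · rw [eq_of_mem_hexagon_coord hp]
      exact hFT (by simp)
    · rw [Finset.coe_singleton, Set.singleton_subset_iff]
      exact fun d => le_refl (coord d a)
  | cons a F _ _ ih =>
    rw [Finset.coe_cons, Set.insert_subset_iff] at hFT
    obtain ⟨c, hH, hc, hFc⟩ := ih hFT.2
    obtain ⟨r, hr, -⟩ := hc 0
    obtain ⟨c', hcc', hH', hc', ha⟩ :=
      hT.exists_hexagon_of_reflTransGen (hconn r (hH hr) a hFT.1) hH hc hr
    refine ⟨c', hH', hc', ?_⟩
    rw [Finset.coe_cons, Set.insert_subset_iff]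
    exact ⟨ha, hFc.trans (hexagon_mono hcc')⟩

theorem RhombusClosed.mem_of_forall_exists_coord_le (hT : RhombusClosed T)
    (hconn : AdjConnected T) {x : ℤ × ℤ} (hx : ∀ d, ∃ p ∈ T, coord d x ≤ coord d p) : x ∈ T := by
  choose p hpT hxp using hx
  obtain ⟨c, hH, -, hpc⟩ := hT.exists_hexagon_superset hconn (Finset.univ_nonempty.image p)
    (by simpa [Set.range_subset_iff] using hpT)
  exact hH fun d => (hxp d).trans (hpc (by simp) d)

theorem RhombusClosed.eq_setOf_bounds (hT : RhombusClosed T) (hconn : AdjConnected T) :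
    ∃ (a₁ b₁ c₁ : WithBot ℤ) (a₂ b₂ c₂ : WithTop ℤ),
      T = {p | a₁ ≤ (p.1 : WithBot ℤ) ∧ (p.1 : WithTop ℤ) ≤ a₂ ∧
        b₁ ≤ (p.2 : WithBot ℤ) ∧ (p.2 : WithTop ℤ) ≤ b₂ ∧
        c₁ ≤ ((p.1 - p.2 : ℤ) : WithBot ℤ) ∧ ((p.1 - p.2 : ℤ) : WithTop ℤ) ≤ c₂} := by
  rcases T.eq_empty_or_nonempty with rfl | hne
  · refine ⟨((1 : ℤ) : WithBot ℤ), ⊥, ⊥, ((0 : ℤ) : WithTop ℤ), ⊤, ⊤, ?_⟩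
    ext p
    simp only [Set.mem_empty_iff_false, Set.mem_ofPred_eq, WithBot.coe_le_coe,
      WithTop.coe_le_coe, false_iff, not_and]
    omega
  obtain ⟨a₁, ha₁⟩ := exists_withBot_le_coe_iff (hne.image Prod.fst)
  obtain ⟨a₂, ha₂⟩ := exists_withTop_coe_le_iff (hne.image Prod.fst)
  obtain ⟨b₁, hb₁⟩ := exists_withBot_le_coe_iff (hne.image Prod.snd)
  obtain ⟨b₂, hb₂⟩ := exists_withTop_coe_le_iff (hne.image Prod.snd)
  obtain ⟨c₁, hc₁⟩ := exists_withBot_le_coe_iff (hne.image fun p => p.1 - p.2)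
  obtain ⟨c₂, hc₂⟩ := exists_withTop_coe_le_iff (hne.image fun p => p.1 - p.2)
  refine ⟨a₁, b₁, c₁, a₂, b₂, c₂, Set.ext fun x => ?_⟩
  simp only [Set.mem_ofPred_eq, ha₁, ha₂, hb₁, hb₂, hc₁, hc₂, Set.exists_mem_image]
  refine ⟨fun hx => ⟨⟨x, hx, le_rfl⟩, ⟨x, hx, le_rfl⟩, ⟨x, hx, le_rfl⟩, ⟨x, hx, le_rfl⟩,
    ⟨x, hx, le_rfl⟩, ⟨x, hx, le_rfl⟩⟩, fun hx => hT.mem_of_forall_exists_coord_le hconn ?_⟩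
  obtain ⟨⟨p₃, hp₃, h₃⟩, ⟨p₀, hp₀, h₀⟩, ⟨p₄, hp₄, h₄⟩, ⟨p₁, hp₁, h₁⟩, ⟨p₂, hp₂, h₂⟩,
    ⟨p₅, hp₅, h₅⟩⟩ := hx
  intro d
  fin_cases d
  · exact ⟨p₀, hp₀, h₀⟩
  · exact ⟨p₁, hp₁, h₁⟩
  · exact ⟨p₂, hp₂, show x.2 - x.1 ≤ p₂.2 - p₂.1 by omega⟩
  · exact ⟨p₃, hp₃, neg_le_neg h₃⟩
  · exact ⟨p₄, hp₄, neg_le_neg h₄⟩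
  · exact ⟨p₅, hp₅, h₅⟩

end Growth

end TriangularLattice

open TriangularLattice

def latticeHom (k l : ℤ) : ℤ × ℤ →+ Z2 :=
  (zmultiplesHom Z2 (wOne k)).coprod (zmultiplesHom Z2 (wTwo l))

theorem latticeHom_apply (k l : ℤ) (p : ℤ × ℤ) :
    latticeHom k l p = p.1 • wOne k + p.2 • wTwo l := by
  simp [latticeHom]

theorem latticeHom_dir (k l : ℤ) (d : Fin 6) :
    latticeHom k l (dir d) =
      ![wOne k, wOne k + wTwo l, wTwo l, -wOne k, -(wOne k + wTwo l), -wTwo l] d := by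
  fin_cases d <;> simp [dir, latticeHom_apply, add_comm]

theorem range_latticeHom (k l : ℤ) : Set.range (latticeHom k l) = ZLat k l := by
  ext s
  simp [ZLat, latticeHom_apply, eq_comm]

theorem latticeHom_injective {k l : ℤ} (h : k + l + 2 ≠ 0) :
    Function.Injective (latticeHom k l) := by
  refine (injective_iff_map_eq_zero _).2 fun p hp => ?_
  simp only [latticeHom_apply, wOne, wTwo, Prod.ext_iff, Prod.fst_add, Prod.snd_add, Prod.smul_fst,
    Prod.smul_snd, smul_eq_mul, Prod.fst_zero, Prod.snd_zero] at hp
  have hdet : p.1 * (k + l + 2) = 0 := by linear_combination -hp.1 + (l + 1) * hp.2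
  have hp₁ : p.1 = 0 := (mul_eq_zero.1 hdet).resolve_right h
  exact Prod.ext hp₁ (by rw [Prod.snd_zero]; omega)

theorem exists_latticeHom_dir_eq_of_adjStep {k l : ℤ} {S : Set Z2} {s s' : Z2}
    (h : adjStep k l S s s') : ∃ d, latticeHom k l (dir d) = s' - s := by
  obtain ⟨-, -, h | h | h | h | ⟨-, h | h⟩⟩ := h
  · exact ⟨0, by simp [latticeHom_dir, h]⟩
  · exact ⟨3, by simp [latticeHom_dir, h]⟩
  · exact ⟨2, by simp [latticeHom_dir, h]⟩
  · exact ⟨5, by simp [latticeHom_dir, h]⟩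
  · exact ⟨1, by simp [latticeHom_dir, h]⟩
  · exact ⟨4, by simp [latticeHom_dir, h]⟩

theorem adjConnected_preimage_latticeHom {k l : ℤ} (hinj : Function.Injective (latticeHom k l))
    {S : Set Z2} (hS : S ⊆ Set.range (latticeHom k l)) (hconn : GConnected k l S) :
    AdjConnected (latticeHom k l ⁻¹' S) := by
  have hlift : ∀ s s', adjStep k l S s s' →
      Adj (latticeHom k l ⁻¹' S) (Function.invFun (latticeHom k l) s)
        (Function.invFun (latticeHom k l) s') := by
    intro s s' hss'
    obtain ⟨d, hd⟩ := exists_latticeHom_dir_eq_of_adjStep hss'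
    obtain ⟨p, rfl⟩ := hS hss'.1
    obtain ⟨q, rfl⟩ := hS hss'.2.1
    simp only [Function.leftInverse_invFun hinj _]
    exact ⟨hss'.1, hss'.2.1, d, hinj (by rw [hd, map_sub])⟩
  intro p hp q hq
  simpa only [Function.onFun, Function.leftInverse_invFun hinj _] using
    (hconn _ hp _ hq).lift _ hlift

theorem rhombusClosed_preimage_latticeHom {k l : ℤ} {S : Set Z2}
    (ha : ∀ s ∈ S, ∀ s' ∈ S, s - s' = wTwo l - wOne k →
      s' - wOne k ∈ S ∧ s' + wTwo l ∈ S)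
    (hb : ∀ s ∈ S, ∀ s' ∈ S, s - s' = wOne k + (2 : ℤ) • wTwo l →
      s' + wTwo l ∈ S ∧ s' + wOne k + wTwo l ∈ S)
    (hc : ∀ s ∈ S, ∀ s' ∈ S, s - s' = (2 : ℤ) • wOne k + wTwo l →
      s' + wOne k ∈ S ∧ s' + wOne k + wTwo l ∈ S) :
    RhombusClosed (latticeHom k l ⁻¹' S) := by
  refine RhombusClosed.of_forall_lt_three fun a ha' b hb' d hd hab => ?_
  have hφ : latticeHom k l b - latticeHom k l a = latticeHom k l (dir d + dir (d + 1)) := by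
    rw [← map_sub, hab]
  rw [map_add, latticeHom_dir, latticeHom_dir] at hφ
  simp only [Set.mem_preimage, map_add, latticeHom_dir]
  obtain rfl | rfl | rfl : d = 0 ∨ d = 1 ∨ d = 2 := by omega
  · have h := hc _ hb' _ ha' (by rw [hφ]; change wOne k + (wOne k + wTwo l) = _; abel)
    simpa [add_assoc] using h
  · have h := hb _ hb' _ ha' (by rw [hφ]; change wOne k + wTwo l + wTwo l = _; abel)
    simpa [add_assoc] using h.symm
  · have h := ha _ hb' _ ha' (by rw [hφ]; change wTwo l + -wOne k = _; abel)
    simpa [sub_eq_add_neg] using h.symm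

theorem quasi_grid_characterization_general
    (k l : ℤ) (hkl : k = l + 1)
    (S : Set Z2) (hS : S ⊆ ZLat k l)
    (hconn : GConnected k l S)
    (ha : ∀ s ∈ S, ∀ s' ∈ S, s - s' = wTwo l - wOne k →
      s' - wOne k ∈ S ∧ s' + wTwo l ∈ S)
    (hb : ∀ s ∈ S, ∀ s' ∈ S, s - s' = wOne k + (2 : ℤ) • wTwo l →
      s' + wTwo l ∈ S ∧ s' + wOne k + wTwo l ∈ S)
    (hc : ∀ s ∈ S, ∀ s' ∈ S, s - s' = (2 : ℤ) • wOne k + wTwo l →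
      s' + wOne k ∈ S ∧ s' + wOne k + wTwo l ∈ S) :
    ∃ (a₁ b₁ c₁ : WithBot ℤ) (a₂ b₂ c₂ : WithTop ℤ),
      S = {p : Z2 | ∃ i j : ℤ, p = i • wOne k + j • wTwo l ∧
        a₁ ≤ (i : WithBot ℤ) ∧ (i : WithTop ℤ) ≤ a₂ ∧
        b₁ ≤ (j : WithBot ℤ) ∧ (j : WithTop ℤ) ≤ b₂ ∧
        c₁ ≤ ((i - j : ℤ) : WithBot ℤ) ∧ ((i - j : ℤ) : WithTop ℤ) ≤ c₂} := by
  rw [← range_latticeHom] at hS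
  have hinj := latticeHom_injective (k := k) (l := l) (by omega)
  obtain ⟨a₁, b₁, c₁, a₂, b₂, c₂, hbounds⟩ :=
    (rhombusClosed_preimage_latticeHom ha hb hc).eq_setOf_bounds
      (adjConnected_preimage_latticeHom hinj hS hconn)
  refine ⟨a₁, b₁, c₁, a₂, b₂, c₂, Set.ext fun s => ⟨fun hs => ?_, ?_⟩⟩
  · obtain ⟨p, rfl⟩ := hS hs
    have hp : p ∈ latticeHom k l ⁻¹' S := hs
    rw [hbounds] at hp
    exact ⟨p.1, p.2, latticeHom_apply k l p, hp⟩
  · rintro ⟨i, j, rfl, hij⟩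
    have hij' : (i, j) ∈ latticeHom k l ⁻¹' S := by rw [hbounds]; exact hij
    simpa [latticeHom_apply] using hij'

/-- for `k − ℓ = 1`, a connected `S ⊆ 𝕃` satisfying the three
completion rules is a (possibly unbounded) hexagon:
`S = {i w₁ + j w₂ : α₁ ≤ i ≤ α₂, β₁ ≤ j ≤ β₂, γ₁ ≤ i − j ≤ γ₂}` with bounds in
`ℤ ∪ {−∞, +∞}`. -/
theorem quasi_grid_characterization
    (k l : ℤ) (hl : 0 ≤ l) (hkl : k = l + 1)
    (S : Set Z2) (hS : S ⊆ ZLat k l)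
    (hconn : GConnected k l S)
    (ha : ∀ s ∈ S, ∀ s' ∈ S, s - s' = wTwo l - wOne k →
      s' - wOne k ∈ S ∧ s' + wTwo l ∈ S)
    (hb : ∀ s ∈ S, ∀ s' ∈ S, s - s' = wOne k + (2 : ℤ) • wTwo l →
      s' + wTwo l ∈ S ∧ s' + wOne k + wTwo l ∈ S)
    (hc : ∀ s ∈ S, ∀ s' ∈ S, s - s' = (2 : ℤ) • wOne k + wTwo l →
      s' + wOne k ∈ S ∧ s' + wOne k + wTwo l ∈ S) :
    ∃ (a₁ b₁ c₁ : WithBot ℤ) (a₂ b₂ c₂ : WithTop ℤ),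
      S = {p : Z2 | ∃ i j : ℤ, p = i • wOne k + j • wTwo l ∧
        a₁ ≤ (i : WithBot ℤ) ∧ (i : WithTop ℤ) ≤ a₂ ∧
        b₁ ≤ (j : WithBot ℤ) ∧ (j : WithTop ℤ) ≤ b₂ ∧
        c₁ ≤ ((i - j : ℤ) : WithBot ℤ) ∧ ((i - j : ℤ) : WithTop ℤ) ≤ c₂} :=
  quasi_grid_characterization_general k l hkl S hS hconn ha hb hc
end

section
/- Let S, T ⊆ ℤ^d be finite nonempty sets such that the sum of S and T is direct. Then the sum of S and −T is also direct, and the sets K := S ⊕ T and L := S ⊕ (−T) satisfy g_K = g_L. Moreover, [K] ≠ [L] if and only if neither S nor T is centrally symmetric. -/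
open scoped Pointwise

noncomputable section

/-- The covariogram of a finite `K ⊆ ℤ^d`: `u ↦ |K ∩ (K + u)|`. -/
def covG {d : ℕ} (K : Set (Fin d → ℤ)) (u : Fin d → ℤ) : ℕ :=
  (K ∩ ((fun x => x + u) '' K)).ncard

/-- `L ∈ [K]`: `L` is a translate of `K` or a translate of `−K`. -/
def sameClassG {d : ℕ} (K L : Set (Fin d → ℤ)) : Prop :=
  ∃ t : Fin d → ℤ, L = (fun x => x + t) '' K ∨ L = (fun x => t - x) '' K

/-- `A ⊆ ℤ^d` is centrally symmetric if `A = −A + t` for some `t`. -/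
def centSymG {d : ℕ} (A : Set (Fin d → ℤ)) : Prop :=
  ∃ t : Fin d → ℤ, A = (fun x => t - x) '' A

/-- The Minkowski sum of `S` and `T` is direct. -/
def directSumG {d : ℕ} (S T : Set (Fin d → ℤ)) : Prop :=
  ∀ s ∈ S, ∀ s' ∈ S, ∀ t ∈ T, ∀ t' ∈ T, s + t = s' + t' → s = s' ∧ t = t'

/-!
Directness means every point of `K = S + T` is `s + t` for a unique pair, so the points of
`K ∩ (K + u)` correspond to the quadruples `(s, t, s', t')` with `(s + t) - (s' + t') = u`;
the involution `(s, t, s', t') ↦ (s, -t', s', -t)` matches them with the quadruples for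
`L = S + (-T)`, whence `g_K = g_L`.

If `L = K + a`, then `S + (-T) = S + (T + a)`; if `L = a - K`, negating gives
`T + (-S) = T + (S - a)`. In both cases one summand cancels, giving the central symmetry of `T`
resp. `S`. Cancellation holds because a direct sum `S ⊕ A` has indicator `1_S * 1_A` in the
group ring `ℤ[ℤ^d]`, which has no zero divisors.
-/

section GroupRing

open AddMonoidAlgebra

variable {G : Type*} [DecidableEq G]

def groupRingIndicator (A : Finset G) : AddMonoidAlgebra ℤ G := ∑ a ∈ A, single a 1

theorem coeff_groupRingIndicator (A : Finset G) (x : G) :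
    (groupRingIndicator A).coeff x = if x ∈ A then 1 else 0 := by
  simp [groupRingIndicator, coeff_sum, Finsupp.single_apply]

theorem groupRingIndicator_injective : Function.Injective (groupRingIndicator (G := G)) := by
  intro A B h
  ext x
  have hx := congrArg (fun f => f.coeff x) h
  simp only [coeff_groupRingIndicator] at hx
  split_ifs at hx <;> simp_all

theorem groupRingIndicator_ne_zero {A : Finset G} (hA : A.Nonempty) :
    groupRingIndicator A ≠ 0 := by
  obtain ⟨a, ha⟩ := hA
  intro h
  simpa [coeff_groupRingIndicator, ha] using congrArg (fun f => f.coeff a) h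

variable [Add G]

theorem groupRingIndicator_add {S A : Finset G}
    (h : Set.InjOn (fun p : G × G => p.1 + p.2) ↑(S ×ˢ A)) :
    groupRingIndicator (S + A) = groupRingIndicator S * groupRingIndicator A := by
  rw [groupRingIndicator, Finset.add_def, Finset.sum_image h, groupRingIndicator,
    groupRingIndicator, Finset.sum_mul_sum, Finset.sum_product]
  simp [single_mul_single]

theorem Finset.eq_of_add_eq_add_of_injOn [UniqueSums G] {S A B : Finset G} (hS : S.Nonempty)
    (hA : Set.InjOn (fun p : G × G => p.1 + p.2) ↑(S ×ˢ A))
    (hB : Set.InjOn (fun p : G × G => p.1 + p.2) ↑(S ×ˢ B))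
    (h : S + A = S + B) : A = B := by
  apply groupRingIndicator_injective
  apply mul_left_cancel₀ (groupRingIndicator_ne_zero hS)
  rw [← groupRingIndicator_add hA, ← groupRingIndicator_add hB, h]

end GroupRing

theorem Set.eq_of_add_eq_add_of_injOn {G : Type*} [Add G] [UniqueSums G] {S A B : Set G}
    (hS : S.Finite) (hSne : S.Nonempty) (hA : A.Finite) (hB : B.Finite)
    (hSA : Set.InjOn (fun p : G × G => p.1 + p.2) (S ×ˢ A))
    (hSB : Set.InjOn (fun p : G × G => p.1 + p.2) (S ×ˢ B))
    (h : S + A = S + B) : A = B := by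
  classical
  lift S to Finset G using hS
  lift A to Finset G using hA
  lift B to Finset G using hB
  rw [← Finset.coe_product] at hSA hSB
  rw [← Finset.coe_add, ← Finset.coe_add, Finset.coe_inj] at h
  exact congrArg _ (Finset.eq_of_add_eq_add_of_injOn (Finset.coe_nonempty.mp hSne) hSA hSB h)

section AddCommGroup

variable {G : Type*} [AddCommGroup G]

theorem image_add_right_eq_singleton_add (t : G) (A : Set G) :
    (fun x => x + t) '' A = {t} + A := by
  rw [Set.singleton_add]
  simp_rw [add_comm]

theorem image_sub_left_eq_singleton_add_neg (t : G) (A : Set G) :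
    (fun x => t - x) '' A = {t} + -A := by
  rw [Set.singleton_add, ← Set.image_neg_eq_neg, Set.image_image]
  simp_rw [sub_eq_add_neg]

def diffReprs (S T : Set G) (u : G) : Set ((G × G) × (G × G)) :=
  {q | q.1 ∈ S ×ˢ T ∧ q.2 ∈ S ×ˢ T ∧ q.1.1 + q.1.2 - (q.2.1 + q.2.2) = u}

theorem ncard_inter_image_add_eq_ncard_diffReprs {S T : Set G}
    (h : Set.InjOn (fun p : G × G => p.1 + p.2) (S ×ˢ T)) (u : G) :
    ((S + T) ∩ (fun x => x + u) '' (S + T)).ncard = (diffReprs S T u).ncard := by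
  have himage : (fun q : (G × G) × (G × G) => q.1.1 + q.1.2) '' diffReprs S T u =
      (S + T) ∩ (fun x => x + u) '' (S + T) := by
    ext x
    constructor
    · rintro ⟨⟨⟨s, t⟩, ⟨s', t'⟩⟩, ⟨⟨hs, ht⟩, ⟨hs', ht'⟩, hu⟩, rfl⟩
      exact ⟨Set.add_mem_add hs ht, s' + t', Set.add_mem_add hs' ht', by
        simp only at hu ⊢; rw [← hu]; abel⟩
    · rintro ⟨⟨s, hs, t, ht, rfl⟩, _, ⟨s', hs', t', ht', rfl⟩, hx⟩
      refine ⟨((s, t), (s', t')), ⟨⟨hs, ht⟩, ⟨hs', ht'⟩, ?_⟩, rfl⟩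
      simp only at hx ⊢
      rw [← hx]
      abel
  rw [← himage, Set.InjOn.ncard_image]
  refine fun q hq q' hq' hsum => Prod.ext (h hq.1 hq'.1 hsum) (h hq.2.1 hq'.2.1 ?_)
  have hu := sub_eq_iff_eq_add.mp hq.2.2
  have hv := sub_eq_iff_eq_add.mp hq'.2.2
  exact add_left_cancel (hu.symm.trans (hsum.trans hv))

theorem ncard_diffReprs_neg_right (S T : Set G) (u : G) :
    (diffReprs S (-T) u).ncard = (diffReprs S T u).ncard := by
  let φ : (G × G) × (G × G) → (G × G) × (G × G) :=
    fun q => ((q.1.1, -q.2.2), (q.2.1, -q.1.2))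
  have hφ : Function.Involutive φ := fun q => by simp [φ]
  have : diffReprs S (-T) u = φ '' diffReprs S T u := by
    rw [hφ.image_eq_preimage_symm]
    ext ⟨⟨s, t⟩, ⟨s', t'⟩⟩
    simp only [diffReprs, φ, Set.mem_preimage, Set.mem_prod, Set.mem_neg, Set.mem_ofPred]
    constructor <;> rintro ⟨⟨hs, ht⟩, ⟨hs', ht'⟩, hu⟩ <;>
      exact ⟨⟨hs, ht'⟩, ⟨hs', ht⟩, by rw [← hu]; module⟩
  rw [this, Set.ncard_image_of_injective _ hφ.injective]

end AddCommGroup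

section DirectSum

variable {d : ℕ} {S T : Set (Fin d → ℤ)}

theorem directSumG.injOn (h : directSumG S T) :
    Set.InjOn (fun p : (Fin d → ℤ) × (Fin d → ℤ) => p.1 + p.2) (S ×ˢ T) :=
  fun _ hp _ hq hpq => Prod.ext_iff.2 (h _ hp.1 _ hq.1 _ hp.2 _ hq.2 hpq)

theorem directSumG.symm (h : directSumG S T) : directSumG T S :=
  fun t ht t' ht' s hs s' hs' hts =>
    (h s hs s' hs' t ht t' ht' (by rw [add_comm s, add_comm s', hts])).symm

theorem directSumG.neg_right (h : directSumG S T) : directSumG S (-T) := by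
  intro s hs s' hs' t ht t' ht' hst
  obtain ⟨rfl, ht't⟩ := h s hs s' hs' (-t') ht' (-t) ht (by rw [← sub_eq_add_neg,
    ← sub_eq_add_neg, sub_eq_sub_iff_add_eq_add, hst])
  exact ⟨rfl, (neg_inj.mp ht't).symm⟩

theorem directSumG.singleton_add_right (h : directSumG S T) (a : Fin d → ℤ) :
    directSumG S ({a} + T) := by
  rintro s hs s' hs' _ ⟨_, rfl, t, ht, rfl⟩ _ ⟨_, rfl, t', ht', rfl⟩ hst
  rw [add_left_comm, add_left_comm s'] at hst
  obtain ⟨rfl, rfl⟩ := h s hs s' hs' t ht t' ht' (add_left_cancel hst)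
  exact ⟨rfl, rfl⟩

theorem directSumG.neg_eq_of_add_neg_eq (hS : S.Finite) (hSne : S.Nonempty) (hT : T.Finite)
    (h : directSumG S T) {t : Fin d → ℤ} (hST : S + -T = {t} + (S + T)) : -T = {t} + T :=
  Set.eq_of_add_eq_add_of_injOn hS hSne hT.neg ((Set.finite_singleton t).add hT)
    h.neg_right.injOn (h.singleton_add_right t).injOn (by rw [hST, add_left_comm])

theorem sameClassG_add_neg_iff (hS : S.Finite) (hSne : S.Nonempty) (hT : T.Finite)
    (hTne : T.Nonempty) (h : directSumG S T) :
    sameClassG (S + T) (S + -T) ↔ centSymG S ∨ centSymG T := by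
  simp only [sameClassG, centSymG, image_add_right_eq_singleton_add,
    image_sub_left_eq_singleton_add_neg]
  constructor
  · rintro ⟨t, hST | hST⟩
    · refine Or.inr ⟨-t, ?_⟩
      calc T = -(-T) := (neg_neg T).symm
        _ = -({t} + T) := by rw [h.neg_eq_of_add_neg_eq hS hSne hT hST]
        _ = {-t} + -T := by rw [neg_add, Set.neg_singleton]
    · -- negating `hST` turns the reflection into a translation, with `S` and `T` swapped
      have hTS : T + -S = {-t} + (T + S) := by
        rw [← neg_neg (T + -S), neg_add, neg_neg, add_comm, hST, neg_add, neg_neg,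
          Set.neg_singleton, add_comm S]
      refine Or.inl ⟨t, ?_⟩
      calc S = -(-S) := (neg_neg S).symm
        _ = -({-t} + S) := by rw [h.symm.neg_eq_of_add_neg_eq hT hTne hS hTS]
        _ = {t} + -S := by rw [neg_add, Set.neg_singleton, neg_neg]
  · rintro (⟨t, hS⟩ | ⟨t, hT⟩)
    · refine ⟨t, Or.inr ?_⟩
      conv_lhs => rw [hS]
      rw [neg_add, add_assoc]
    · refine ⟨-t, Or.inl ?_⟩
      have hnegT : -T = {-t} + T := by
        conv_lhs => rw [hT]
        rw [neg_add, neg_neg, Set.neg_singleton]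
      rw [hnegT, add_left_comm]

end DirectSum

/-- if the sum of finite nonempty `S, T ⊆ ℤ^d` is direct, then so is
the sum of `S` and `−T`, the sets `K = S ⊕ T` and `L = S ⊕ (−T)` have equal
covariograms, and `[K] ≠ [L]` iff neither `S` nor `T` is centrally symmetric. -/
theorem direct_sum_homometry
    (d : ℕ) (S T : Set (Fin d → ℤ))
    (hSfin : S.Finite) (hTfin : T.Finite)
    (hSne : S.Nonempty) (hTne : T.Nonempty)
    (hdir : directSumG S T) :
    directSumG S (-T) ∧
      covG (S + T) = covG (S + -T) ∧
      (¬ sameClassG (S + T) (S + -T) ↔ ¬ centSymG S ∧ ¬ centSymG T) := by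
  refine ⟨hdir.neg_right, funext fun u => ?_, ?_⟩
  · rw [covG, covG, ncard_inter_image_add_eq_ncard_diffReprs hdir.injOn,
      ncard_inter_image_add_eq_ncard_diffReprs hdir.neg_right.injOn, ncard_diffReprs_neg_right]
  · rw [sameClassG_add_neg_iff hSfin hSne hTfin hTne hdir, not_or]
end
end

section
/- Let ℓ, m ≥ 2 and let K ⊆ ℤ^ℓ and L ⊆ ℤ^m be finite lattice-convex sets, neither of which is centrally symmetric. Then K × L and K × (−L) are finite lattice-convex subsets of ℤ^{ℓ+m} forming a nontrivially homometric pair: g_{K×L} = g_{K×(−L)} and [K×L] ≠ [K×(−L)]. -/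
open scoped Pointwise

/-! Covariograms factor over products, `g_{K × L}(u, v) = g_K(u) g_L(v)`, and `g_{-L} = g_L`,
so `K × L` and `K × (-L)` are homometric. A translate or reflection of a product of nonempty
sets is the product of the translated or reflected factors, so `K × (-L) ∈ [K × L]` would make
`-L` a translate of `L` or `K` a reflection of itself, i.e. `L` or `K` centrally symmetric. -/

noncomputable section

/-- `K ⊆ ℤ^d` is lattice-convex if it is the intersection of `ℤ^d` with a convex
subset of `ℝ^d`. -/
def latticeConvexG {d : ℕ} (K : Set (Fin d → ℤ)) : Prop :=
  ∃ C : Set (Fin d → ℝ), Convex ℝ C ∧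
    K = (fun (x : Fin d → ℤ) (i : Fin d) => (x i : ℝ)) ⁻¹' C

/-- The Cartesian product `K × L ⊆ ℤ^(l+m)` of `K ⊆ ℤ^l` and `L ⊆ ℤ^m`. -/
def prodSet {l m : ℕ} (K : Set (Fin l → ℤ)) (L : Set (Fin m → ℤ)) :
    Set (Fin (l + m) → ℤ) :=
  {z | (fun i => z (Fin.castAdd m i)) ∈ K ∧ (fun j => z (Fin.natAdd l j)) ∈ L}

open Set

def Fin.splitAddEquiv {α : Type*} [Add α] (l m : ℕ) :
    (Fin (l + m) → α) ≃+ (Fin l → α) × (Fin m → α) :=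
  { (Fin.appendEquiv l m).symm with map_add' := fun _ _ => rfl }

section Translates

variable {G H : Type*}

theorem AddEquiv.image_add_image [AddGroup G] [AddGroup H] (e : G ≃+ H) (S : Set G) (u : H) :
    (· + u) '' (e '' S) = e '' ((· + e.symm u) '' S) :=
  image_comm fun x => by simp

theorem AddEquiv.image_sub_image [AddGroup G] [AddGroup H] (e : G ≃+ H) (S : Set G) (u : H) :
    (u - ·) '' (e '' S) = e '' ((e.symm u - ·) '' S) :=
  image_comm fun x => by simp

theorem AddEquiv.image_inter_image_add [AddGroup G] [AddGroup H] (e : G ≃+ H) (S : Set G)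
    (u : H) :
    e '' S ∩ (· + u) '' (e '' S) = e '' (S ∩ (· + e.symm u) '' S) := by
  rw [e.image_add_image, image_inter e.injective]

theorem Set.image_add_prod [Add G] [Add H] (K : Set G) (L : Set H) (v : G × H) :
    (· + v) '' (K ×ˢ L) = ((· + v.1) '' K) ×ˢ ((· + v.2) '' L) :=
  (prod_image_image_eq (m₁ := (· + v.1)) (m₂ := (· + v.2))).symm

theorem Set.image_sub_prod [Sub G] [Sub H] (K : Set G) (L : Set H) (v : G × H) :
    (v - ·) '' (K ×ˢ L) = ((v.1 - ·) '' K) ×ˢ ((v.2 - ·) '' L) :=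
  prod_image_image_eq.symm

theorem Set.prod_inter_image_add [Add G] [Add H] (K : Set G) (L : Set H) (v : G × H) :
    K ×ˢ L ∩ (· + v) '' (K ×ˢ L) = (K ∩ (· + v.1) '' K) ×ˢ (L ∩ (· + v.2) '' L) := by
  rw [image_add_prod, prod_inter_prod]

theorem Set.neg_inter_image_add [AddCommGroup G] (A : Set G) (u : G) :
    -A ∩ (· + u) '' (-A) = (u - ·) '' (A ∩ (· + u) '' A) := by
  ext x
  simp only [image_add_right, mem_inter_iff, mem_neg, mem_preimage, mem_image, ← sub_eq_add_neg]
  constructor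
  · rintro ⟨hx, hxu⟩
    exact ⟨u - x, ⟨by rwa [neg_sub] at hxu, by rwa [sub_sub_cancel_left]⟩,
      sub_sub_cancel u x⟩
  · rintro ⟨y, ⟨hy, hyu⟩, rfl⟩
    exact ⟨by rwa [neg_sub], by rwa [sub_sub_cancel_left, neg_neg]⟩

end Translates

section LatticeSets

variable {d l m : ℕ}

theorem prodSet_eq_image (K : Set (Fin l → ℤ)) (L : Set (Fin m → ℤ)) :
    prodSet K L = (Fin.splitAddEquiv l m).symm '' (K ×ˢ L) :=
  ((Fin.splitAddEquiv l m).toEquiv.image_symm_eq_preimage (K ×ˢ L)).symm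

theorem Set.Finite.prodSet {K : Set (Fin l → ℤ)} {L : Set (Fin m → ℤ)} (hK : K.Finite)
    (hL : L.Finite) : (prodSet K L).Finite := by
  rw [prodSet_eq_image]
  exact (hK.prod hL).image _

theorem latticeConvexG.neg {A : Set (Fin d → ℤ)} (hA : latticeConvexG A) :
    latticeConvexG (-A) := by
  obtain ⟨C, hC, rfl⟩ := hA
  refine ⟨-C, hC.neg, ?_⟩
  ext x
  simp [Pi.neg_def]

theorem latticeConvexG.prodSet {K : Set (Fin l → ℤ)} {L : Set (Fin m → ℤ)}
    (hK : latticeConvexG K) (hL : latticeConvexG L) : latticeConvexG (prodSet K L) := by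
  obtain ⟨C, hC, rfl⟩ := hK
  obtain ⟨D, hD, rfl⟩ := hL
  exact ⟨LinearMap.funLeft ℝ ℝ (Fin.castAdd m) ⁻¹' C ∩
      LinearMap.funLeft ℝ ℝ (Fin.natAdd l) ⁻¹' D,
    (hC.linear_preimage _).inter (hD.linear_preimage _), rfl⟩

theorem covG_prodSet (K : Set (Fin l → ℤ)) (L : Set (Fin m → ℤ)) (u : Fin (l + m) → ℤ) :
    covG (prodSet K L) u =
      covG K (fun i => u (Fin.castAdd m i)) * covG L (fun j => u (Fin.natAdd l j)) := by
  rw [covG, prodSet_eq_image, AddEquiv.image_inter_image_add,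
    ncard_image_of_injective _ (AddEquiv.injective _), prod_inter_image_add, ncard_prod]
  rfl

theorem covG_neg (A : Set (Fin d → ℤ)) : covG (-A) = covG A := by
  ext u
  rw [covG, covG, neg_inter_image_add, ncard_image_of_injective _ sub_right_injective]

theorem Set.Nonempty.of_not_centSymG {A : Set (Fin d → ℤ)} (hA : ¬ centSymG A) :
    A.Nonempty :=
  nonempty_iff_ne_empty.2 fun h => hA ⟨0, by simp [h]⟩

theorem centSymG_of_neg_eq_image_add {A : Set (Fin d → ℤ)} {t : Fin d → ℤ}
    (h : -A = (· + t) '' A) : centSymG A := by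
  refine ⟨-t, ?_⟩
  calc A = -(-A) := (neg_neg A).symm
    _ = (fun x => -t - x) '' A := by
      rw [h, ← image_neg_eq_neg, image_image]
      simp only [neg_add_rev, sub_eq_add_neg]

theorem not_sameClassG_prodSet_neg {K : Set (Fin l → ℤ)} {L : Set (Fin m → ℤ)}
    (hK : ¬ centSymG K) (hL : ¬ centSymG L) : ¬ sameClassG (prodSet K L) (prodSet K (-L)) := by
  have hne : (K ×ˢ (-L)).Nonempty :=
    (Nonempty.of_not_centSymG hK).prod (Nonempty.of_not_centSymG hL).neg
  have hinj := image_injective.2 (Fin.splitAddEquiv (α := ℤ) l m).symm.injective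
  rintro ⟨t, ht | ht⟩
  · rw [prodSet_eq_image, prodSet_eq_image, AddEquiv.image_add_image, image_add_prod,
      hinj.eq_iff, prod_eq_prod_iff_of_nonempty hne] at ht
    exact hL (centSymG_of_neg_eq_image_add ht.2)
  · rw [prodSet_eq_image, prodSet_eq_image, AddEquiv.image_sub_image, image_sub_prod,
      hinj.eq_iff, prod_eq_prod_iff_of_nonempty hne] at ht
    exact hK ⟨_, ht.1⟩

end LatticeSets

theorem product_homometric_pair_general
    (l m : ℕ)
    (K : Set (Fin l → ℤ)) (L : Set (Fin m → ℤ))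
    (hKfin : K.Finite) (hLfin : L.Finite)
    (hKconv : latticeConvexG K) (hLconv : latticeConvexG L)
    (hKsym : ¬ centSymG K) (hLsym : ¬ centSymG L) :
    (prodSet K L).Finite ∧ (prodSet K (-L)).Finite ∧
      latticeConvexG (prodSet K L) ∧ latticeConvexG (prodSet K (-L)) ∧
      covG (prodSet K L) = covG (prodSet K (-L)) ∧
      ¬ sameClassG (prodSet K L) (prodSet K (-L)) := by
  refine ⟨hKfin.prodSet hLfin, hKfin.prodSet hLfin.neg, hKconv.prodSet hLconv,
    hKconv.prodSet hLconv.neg, ?_, not_sameClassG_prodSet_neg hKsym hLsym⟩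
  ext u
  rw [covG_prodSet, covG_prodSet, covG_neg]

/-- for `ℓ, m ≥ 2` and finite lattice-convex `K ⊆ ℤ^ℓ`, `L ⊆ ℤ^m`,
neither centrally symmetric, the sets `K × L` and `K × (−L)` are finite
lattice-convex subsets of `ℤ^(ℓ+m)` forming a nontrivially homometric pair. -/
theorem product_homometric_pair
    (l m : ℕ) (hl : 2 ≤ l) (hm : 2 ≤ m)
    (K : Set (Fin l → ℤ)) (L : Set (Fin m → ℤ))
    (hKfin : K.Finite) (hLfin : L.Finite)
    (hKconv : latticeConvexG K) (hLconv : latticeConvexG L)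
    (hKsym : ¬ centSymG K) (hLsym : ¬ centSymG L) :
    (prodSet K L).Finite ∧ (prodSet K (-L)).Finite ∧
      latticeConvexG (prodSet K L) ∧ latticeConvexG (prodSet K (-L)) ∧
      covG (prodSet K L) = covG (prodSet K (-L)) ∧
      ¬ sameClassG (prodSet K L) (prodSet K (-L)) :=
  product_homometric_pair_general l m K L hKfin hLfin hKconv hLconv hKsym hLsym

end
end
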